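/- arXiv:2604.00148 — 5 statements merged into one kernel-verified Lean document; each statement's English description precedes it below -/
import Mathlib

section
/- For a bivariate polynomial v of degree at most N in each variable, the composed function v ∘ ψ (where ψ is the inverse Duffy map) has square-integrable gradient over the unit triangle if and only if v(x,y) = (1−y)·q(x,y) + c for some polynomial q of degree at most N in x and N−1 in y and a constant c. -/
/-!
By the chain rule, `∇(v ∘ ψ) = (1 - y)⁻¹ (∂ₓv, x ∂ₓv + (1 - y) ∂ᵧv) ∘ ψ` off the line `y = 1`.
If `v = (1 - y) q + c`, the factor `1 - y` cancels and the gradient is bounded on the triangle.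
If instead `∂ₓv(u₀, 1) ≠ 0` for some `u₀ ∈ (0, 1)`, then `‖∇(v ∘ ψ)‖ ≥ ε / (1 - y)` on the wedge
`ψ⁻¹((u₀ - δ, u₀ + δ) × (1 - δ, 1))`, whose horizontal sections have length `2δ (1 - y)`; by Fubini
the squared gradient integrates there like `∫ (1 - y)⁻¹ dy = ∞`. So square integrability forces
`∂ₓv = 0` on `(0, 1) × {1}`, hence on the whole line, so `v(·, 1)` is a constant `c`. Then `X₁ - 1`
divides `v - c`, and the degree bounds on the quotient follow from additivity of `degreeOf` on
products.
-/

open MeasureTheory MvPolynomial Set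

namespace MvPolynomial

variable {R σ : Type*} [CommRing R]

theorem dvd_aeval_sub_aeval {S : Type*} [CommRing S] [Algebra R S] {f g : σ → S} {d : S}
    (h : ∀ i, d ∣ f i - g i) (p : MvPolynomial σ R) : d ∣ aeval f p - aeval g p := by
  induction p using MvPolynomial.induction_on with
  | C a => simp
  | add p q hp hq => simpa [add_sub_add_comm] using dvd_add hp hq
  | mul_X p i hp =>
    have key : aeval f (p * X i) - aeval g (p * X i)
        = (aeval f p - aeval g p) * f i + aeval g p * (f i - g i) := by simp; ring
    rw [key]
    exact dvd_add (dvd_mul_of_dvd_left hp _) (dvd_mul_of_dvd_right (h i) _)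

theorem X_sub_C_dvd_sub_bind₁_update [DecidableEq σ] (i : σ) (a : R) (p : MvPolynomial σ R) :
    X i - C a ∣ p - bind₁ (Function.update X i (C a)) p := by
  simpa [aeval_eq_bind₁] using dvd_aeval_sub_aeval (R := R) (f := X)
    (g := Function.update X i (C a)) (d := X i - C a)
    (fun j => by rcases eq_or_ne j i with rfl | hj <;> simp [*]) p

end MvPolynomial

noncomputable def evalPair (v : MvPolynomial (Fin 2) ℝ) (z : ℝ × ℝ) : ℝ := eval ![z.1, z.2] v

noncomputable def duffyInv (p : ℝ × ℝ) : ℝ × ℝ := (p.1 / (1 - p.2), p.2)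

def unitTriangle : Set (ℝ × ℝ) := {p | 0 ≤ p.1 ∧ 0 ≤ p.2 ∧ p.1 + p.2 ≤ 1}

def duffyWedge (a b δ : ℝ) : Set (ℝ × ℝ) := duffyInv ⁻¹' (Ioo a b ×ˢ Ioo (1 - δ) 1)

theorem evalPair_eq_zero_of_infinite {w : MvPolynomial (Fin 2) ℝ} {s : Set ℝ} {y : ℝ}
    (hs : s.Infinite) (h : ∀ x ∈ s, evalPair w (x, y) = 0) (x : ℝ) : evalPair w (x, y) = 0 := by
  set θ : Polynomial ℝ := aeval ![Polynomial.X, Polynomial.C y] w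
  have hθ (t : ℝ) : θ.eval t = evalPair w (t, y) := by
    have hpt : (fun i => Polynomial.aeval t (![Polynomial.X, Polynomial.C y] i)) = ![t, y] := by
      funext i; fin_cases i <;> simp
    rw [← Polynomial.coe_aeval_eq_eval, ← AlgHom.comp_apply, comp_aeval, hpt]
    rfl
  have hθ0 : θ = 0 := θ.eq_zero_of_infinite_isRoot (hs.mono fun t ht => by simp [hθ, h t ht])
  rw [← hθ, hθ0, Polynomial.eval_zero]

theorem exists_eq_one_sub_X_mul_add_C {v : MvPolynomial (Fin 2) ℝ} {c : ℝ}
    (hv : ∀ x, evalPair v (x, 1) = c) :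
    ∃ q : MvPolynomial (Fin 2) ℝ, v = (1 - X 1) * q + C c := by
  obtain ⟨r, hr⟩ := X_sub_C_dvd_sub_bind₁_update 1 (1 : ℝ) v
  have hsub : bind₁ (Function.update X 1 (C 1)) v = C c := by
    refine MvPolynomial.funext fun x => ?_
    rw [eval_C, ← hv (x 0)]
    have hpt : (fun j => eval x (Function.update X 1 (C 1) j)) = ![x 0, 1] := by
      funext j; fin_cases j <;> simp
    change eval₂Hom (RingHom.id ℝ) x _ = _
    rw [eval₂Hom_bind₁]
    exact congrArg (eval · v) hpt
  refine ⟨-r, ?_⟩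
  rw [hsub, map_one] at hr
  linear_combination hr

theorem degreeOf_le_of_eq_one_sub_X_mul_add_C {v q : MvPolynomial (Fin 2) ℝ} {c : ℝ} {N : ℕ}
    (hv : v = (1 - X 1) * q + C c) (hv0 : v.degreeOf 0 ≤ N) (hv1 : v.degreeOf 1 ≤ N) :
    q.degreeOf 0 ≤ N ∧ q.degreeOf 1 ≤ N - 1 := by
  rcases eq_or_ne q 0 with rfl | hq
  · simp
  have hX : (1 - X 1 : MvPolynomial (Fin 2) ℝ).degreeOf 1 = 1 := by
    rw [sub_eq_neg_add, degreeOf_add_eq_of_degreeOf_lt] <;> simp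
  have hX0 : (1 - X 1 : MvPolynomial (Fin 2) ℝ) ≠ 0 := fun h => by simp [h] at hX
  have hdeg (i : Fin 2) : (1 - X 1 : MvPolynomial (Fin 2) ℝ).degreeOf i + q.degreeOf i ≤ N := by
    rw [← degreeOf_mul_eq hX0 hq, eq_sub_of_add_eq hv.symm]
    refine (degreeOf_sub_le i v (C c)).trans (max_le ?_ (by simp))
    fin_cases i <;> assumption
  have := hdeg 0
  have := hdeg 1
  omega

section Calculus

open ContinuousLinearMap

variable {𝕜 : Type*} [NontriviallyNormedField 𝕜]

theorem norm_smul_fst_add_smul_snd_le (a b : 𝕜) :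
    ‖a • fst 𝕜 𝕜 𝕜 + b • snd 𝕜 𝕜 𝕜‖ ≤ ‖a‖ + ‖b‖ :=
  calc ‖a • fst 𝕜 𝕜 𝕜 + b • snd 𝕜 𝕜 𝕜‖ ≤ ‖a‖ * ‖fst 𝕜 𝕜 𝕜‖ + ‖b‖ * ‖snd 𝕜 𝕜 𝕜‖ := by
        rw [← norm_smul, ← norm_smul]; exact norm_add_le _ _
    _ ≤ ‖a‖ * 1 + ‖b‖ * 1 := by gcongr <;> simp
    _ = ‖a‖ + ‖b‖ := by ring

theorem norm_le_norm_smul_fst_add_smul_snd (a b : 𝕜) :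
    ‖a‖ ≤ ‖a • fst 𝕜 𝕜 𝕜 + b • snd 𝕜 𝕜 𝕜‖ := by
  simpa using (a • fst 𝕜 𝕜 𝕜 + b • snd 𝕜 𝕜 𝕜).le_opNorm (1, 0)

theorem hasFDerivAt_evalPair (v : MvPolynomial (Fin 2) ℝ) (z : ℝ × ℝ) :
    HasFDerivAt (evalPair v)
      (evalPair (pderiv 0 v) z • fst ℝ ℝ ℝ + evalPair (pderiv 1 v) z • snd ℝ ℝ ℝ) z := by
  induction v using MvPolynomial.induction_on with
  | C a =>
    have hfun : evalPair (C a) = fun _ => a := funext fun _ => eval_C a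
    rw [hfun]
    simpa [evalPair] using hasFDerivAt_const (𝕜 := ℝ) a z
  | add p q hp hq =>
    have hfun : evalPair (p + q) = fun w => evalPair p w + evalPair q w :=
      funext fun w => map_add _ p q
    rw [hfun]
    refine (hp.add hq).congr_fderiv ?_
    simp only [evalPair, map_add]
    module
  | mul_X p i hp =>
    have hfun : evalPair (p * X i) = fun w => evalPair p w * ![w.1, w.2] i := by
      funext w; simp [evalPair]
    rw [hfun]
    fin_cases i
    · refine (hp.mul hasFDerivAt_fst).congr_fderiv ?_
      ext <;> simp [evalPair]
    · refine (hp.mul hasFDerivAt_snd).congr_fderiv ?_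
      ext <;> simp [evalPair]

theorem continuous_evalPair (v : MvPolynomial (Fin 2) ℝ) : Continuous (evalPair v) :=
  continuous_iff_continuousAt.2 fun z => (hasFDerivAt_evalPair v z).continuousAt

theorem hasDerivAt_evalPair_left (v : MvPolynomial (Fin 2) ℝ) (x y : ℝ) :
    HasDerivAt (fun t => evalPair v (t, y)) (evalPair (pderiv 0 v) (x, y)) x := by
  have h := (hasFDerivAt_evalPair v (x, y)).comp_hasDerivAt x
    ((hasDerivAt_id x).prodMk (hasDerivAt_const x y))
  exact h.congr_deriv (by simp)

theorem evalPair_eq_of_pderiv_eq_zero {v : MvPolynomial (Fin 2) ℝ} {y : ℝ}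
    (h : ∀ x, evalPair (pderiv 0 v) (x, y) = 0) (x : ℝ) : evalPair v (x, y) = evalPair v (0, y) :=
  is_const_of_deriv_eq_zero (fun t => (hasDerivAt_evalPair_left v t y).differentiableAt)
    (fun t => (hasDerivAt_evalPair_left v t y).deriv.trans (h t)) x 0

theorem hasFDerivAt_comp_duffyInv {F : ℝ × ℝ → ℝ} {a b : ℝ} {p : ℝ × ℝ} (hp : p.2 ≠ 1)
    (hF : HasFDerivAt F (a • fst ℝ ℝ ℝ + b • snd ℝ ℝ ℝ) (duffyInv p)) :
    HasFDerivAt (F ∘ duffyInv)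
      ((1 - p.2)⁻¹ • (a • fst ℝ ℝ ℝ + ((duffyInv p).1 * a + (1 - p.2) * b) • snd ℝ ℝ ℝ)) p := by
  have hden : 1 - p.2 ≠ 0 := sub_ne_zero.2 hp.symm
  have hinv := (hasDerivAt_inv hden).comp_hasFDerivAt p
    ((hasFDerivAt_const (1 : ℝ) p).sub (hasFDerivAt_snd (𝕜 := ℝ)))
  have hψ : HasFDerivAt duffyInv _ p := (hasFDerivAt_fst.mul hinv).prodMk hasFDerivAt_snd
  refine (hF.comp p hψ).congr_fderiv ?_
  ext <;> simp [duffyInv] <;> field_simp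

theorem fderiv_evalPair_comp_duffyInv (v : MvPolynomial (Fin 2) ℝ) {p : ℝ × ℝ} (hp : p.2 ≠ 1) :
    fderiv ℝ (evalPair v ∘ duffyInv) p =
      (1 - p.2)⁻¹ • (evalPair (pderiv 0 v) (duffyInv p) • fst ℝ ℝ ℝ
        + evalPair (X 0 * pderiv 0 v + (1 - X 1) * pderiv 1 v) (duffyInv p) • snd ℝ ℝ ℝ) := by
  rw [(hasFDerivAt_comp_duffyInv hp (hasFDerivAt_evalPair v _)).fderiv]
  simp [evalPair, duffyInv]

theorem fderiv_evalPair_comp_duffyInv_of_eq {v q : MvPolynomial (Fin 2) ℝ} {c : ℝ}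
    (hv : v = (1 - X 1) * q + C c) {p : ℝ × ℝ} (hp : p.2 ≠ 1) :
    fderiv ℝ (evalPair v ∘ duffyInv) p = evalPair (pderiv 0 q) (duffyInv p) • fst ℝ ℝ ℝ
      + evalPair (X 0 * pderiv 0 q - q + (1 - X 1) * pderiv 1 q) (duffyInv p) • snd ℝ ℝ ℝ := by
  rw [fderiv_evalPair_comp_duffyInv v hp, hv, smul_add, smul_smul, smul_smul]
  congr 2 <;> simp [evalPair, duffyInv] <;> field_simp; ring

end Calculus

theorem measurableSet_unitTriangle : MeasurableSet unitTriangle :=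
  (measurableSet_le measurable_const measurable_fst).inter
    ((measurableSet_le measurable_const measurable_snd).inter
      (measurableSet_le (measurable_fst.add measurable_snd) measurable_const))

theorem unitTriangle_subset_Icc : unitTriangle ⊆ Icc 0 1 := fun p ⟨h1, h2, h3⟩ =>
  ⟨⟨h1, h2⟩, show p.1 ≤ 1 by linarith, show p.2 ≤ 1 by linarith⟩

instance : IsFiniteMeasure (volume.restrict unitTriangle) :=
  isFiniteMeasure_restrict.2
    ((measure_mono unitTriangle_subset_Icc).trans_lt isCompact_Icc.measure_lt_top).ne

theorem ae_restrict_unitTriangle :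
    ∀ᵐ p ∂volume.restrict unitTriangle, p ∈ unitTriangle ∧ p.2 ≠ 1 := by
  have hline : (volume : Measure (ℝ × ℝ)) {p | p.2 = 1} = 0 := by
    rw [show {p : ℝ × ℝ | p.2 = 1} = univ ×ˢ {1} by ext; simp, Measure.volume_eq_prod,
      Measure.prod_prod]
    simp
  filter_upwards [ae_restrict_mem measurableSet_unitTriangle,
    ae_restrict_of_ae (measure_eq_zero_iff_ae_notMem.1 hline)] with p hpT hp
  exact ⟨hpT, hp⟩

theorem duffyInv_mem_Icc {p : ℝ × ℝ} (hp : p ∈ unitTriangle) (hp1 : p.2 ≠ 1) :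
    duffyInv p ∈ Icc 0 1 := by
  obtain ⟨h1, h2, h3⟩ := hp
  have hden : 0 < 1 - p.2 := sub_pos.2 (lt_of_le_of_ne (by linarith) hp1)
  exact ⟨⟨div_nonneg h1 hden.le, h2⟩, (div_le_one hden).2 (by linarith), show p.2 ≤ 1 by linarith⟩

theorem memLp_fderiv_evalPair_comp_duffyInv {v q : MvPolynomial (Fin 2) ℝ} {c : ℝ}
    (hv : v = (1 - X 1) * q + C c) :
    MemLp (fderiv ℝ (evalPair v ∘ duffyInv)) 2 (volume.restrict unitTriangle) := by
  obtain ⟨K₀, hK₀⟩ := isCompact_Icc.exists_bound_of_continuousOn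
    (continuous_evalPair (pderiv 0 q)).continuousOn
  obtain ⟨K₁, hK₁⟩ := isCompact_Icc.exists_bound_of_continuousOn
    (continuous_evalPair (X 0 * pderiv 0 q - q + (1 - X 1) * pderiv 1 q)).continuousOn
  refine MemLp.of_bound (measurable_fderiv ℝ _).aestronglyMeasurable (K₀ + K₁) ?_
  filter_upwards [ae_restrict_unitTriangle] with p ⟨hpT, hp⟩
  have hz := duffyInv_mem_Icc hpT hp
  rw [fderiv_evalPair_comp_duffyInv_of_eq hv hp]
  exact (norm_smul_fst_add_smul_snd_le _ _).trans (add_le_add (hK₀ _ hz) (hK₁ _ hz))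

theorem measurable_duffyInv : Measurable duffyInv :=
  (measurable_fst.div (measurable_const.sub measurable_snd)).prodMk measurable_snd

theorem measurableSet_duffyWedge (a b δ : ℝ) : MeasurableSet (duffyWedge a b δ) :=
  measurable_duffyInv (measurableSet_Ioo.prod measurableSet_Ioo)

theorem mem_duffyWedge {a b δ : ℝ} {p : ℝ × ℝ} : p ∈ duffyWedge a b δ ↔
    (a < p.1 / (1 - p.2) ∧ p.1 / (1 - p.2) < b) ∧ 1 - δ < p.2 ∧ p.2 < 1 :=
  Iff.rfl

theorem duffyWedge_subset_unitTriangle {a b δ : ℝ} (ha : 0 ≤ a) (hb : b ≤ 1) (hδ : δ ≤ 1) :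
    duffyWedge a b δ ⊆ unitTriangle := by
  intro p hp
  obtain ⟨⟨hu₁, hu₂⟩, hy₁, hy₂⟩ := mem_duffyWedge.1 hp
  have hden : 0 < 1 - p.2 := sub_pos.2 hy₂
  have hx₁ : a * (1 - p.2) < p.1 := (lt_div_iff₀ hden).1 hu₁
  have hx₂ : p.1 < b * (1 - p.2) := (div_lt_iff₀ hden).1 hu₂
  refine ⟨?_, ?_, ?_⟩ <;> nlinarith

theorem integral_indicator_duffyWedge {a b δ y : ℝ} (hab : a < b) (hy : y ∈ Ioo (1 - δ) 1) :
    ∫ x, (duffyWedge a b δ).indicator (fun p => (1 - p.2)⁻¹ ^ 2) (x, y) = (b - a) * (1 - y)⁻¹ := by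
  have hden : 0 < 1 - y := sub_pos.2 hy.2
  have hpre : (fun x => (x, y)) ⁻¹' duffyWedge a b δ = Ioo (a * (1 - y)) (b * (1 - y)) := by
    ext x
    simp only [mem_preimage, mem_duffyWedge, mem_Ioo, lt_div_iff₀ hden, div_lt_iff₀ hden, hy.1,
      hy.2, and_true]
  have hsec : (fun x => (duffyWedge a b δ).indicator (fun p => (1 - p.2)⁻¹ ^ 2) (x, y))
      = (Ioo (a * (1 - y)) (b * (1 - y))).indicator fun _ => (1 - y)⁻¹ ^ 2 := by
    ext x
    rw [← hpre, ← indicator_comp_right]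
    rfl
  rw [hsec, integral_indicator_const _ measurableSet_Ioo, Real.volume_real_Ioo_of_le (by nlinarith),
    smul_eq_mul]
  field_simp

theorem not_integrableOn_duffyWedge {a b δ : ℝ} (hab : a < b) (hδ : 0 < δ) :
    ¬ IntegrableOn (fun p : ℝ × ℝ => (1 - p.2)⁻¹ ^ 2) (duffyWedge a b δ) := by
  intro h
  have hW := measurableSet_duffyWedge a b δ
  have hint := (integrable_indicator_iff hW).2 h
  rw [Measure.volume_eq_prod] at hint
  have hsec : IntegrableOn (fun y => (b - a) * (1 - y)⁻¹) (Ioo (1 - δ) 1) :=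
    hint.integral_prod_right.integrableOn.congr_fun
      (fun y hy => integral_indicator_duffyWedge hab hy) measurableSet_Ioo
  have hinv : IntervalIntegrable (fun y => (y - 1)⁻¹) volume (1 - δ) 1 := by
    rw [intervalIntegrable_iff_integrableOn_Ioo_of_le (by linarith)]
    refine IntegrableOn.congr_fun (hsec.const_mul (-(b - a)⁻¹)) (fun y _ => ?_) measurableSet_Ioo
    rw [← mul_assoc, neg_mul, inv_mul_cancel₀ (sub_pos.2 hab).ne', neg_one_mul, neg_inv, neg_sub]
  rw [intervalIntegrable_sub_inv_iff] at hinv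
  rcases hinv with h | h
  · linarith
  · exact h right_mem_uIcc

theorem not_memLp_of_le_norm_on_duffyWedge {E : Type*} [NormedAddCommGroup E]
    {f : ℝ × ℝ → E} {s : Set (ℝ × ℝ)} {a b δ ε : ℝ} (hab : a < b) (hδ : 0 < δ) (hε : 0 < ε)
    (hWs : duffyWedge a b δ ⊆ s) (hf : ∀ p ∈ duffyWedge a b δ, ε / (1 - p.2) ≤ ‖f p‖) :
    ¬ MemLp f 2 (volume.restrict s) := by
  intro hmem
  have hW := measurableSet_duffyWedge a b δ
  have hsq : IntegrableOn (fun p => ‖f p‖ ^ 2) (duffyWedge a b δ) :=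
    (hmem.mono_measure (Measure.restrict_mono hWs le_rfl)).integrable_norm_pow two_ne_zero
  have hbound : IntegrableOn (fun p => ε ^ 2 * (1 - p.2)⁻¹ ^ 2) (duffyWedge a b δ) := by
    refine hsq.mono' (by fun_prop) (ae_restrict_of_forall_mem hW fun p hp => ?_)
    have hden : 0 < 1 - p.2 := sub_pos.2 (mem_duffyWedge.1 hp).2.2
    rw [Real.norm_eq_abs, abs_of_nonneg (by positivity), ← mul_pow, ← div_eq_mul_inv]
    exact pow_le_pow_left₀ (by positivity) (hf p hp) 2
  exact not_integrableOn_duffyWedge hab hδ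
    (IntegrableOn.congr_fun (hbound.const_mul (ε ^ 2)⁻¹) (fun p _ => by field_simp) hW)

theorem not_memLp_fderiv_evalPair_comp_duffyInv {v : MvPolynomial (Fin 2) ℝ} {u₀ : ℝ}
    (hu₀ : u₀ ∈ Ioo 0 1) (hv : evalPair (pderiv 0 v) (u₀, 1) ≠ 0) :
    ¬ MemLp (fderiv ℝ (evalPair v ∘ duffyInv)) 2 (volume.restrict unitTriangle) := by
  set g := evalPair (pderiv 0 v)
  set ε := ‖g (u₀, 1)‖ / 2
  have hε' : 0 < ‖g (u₀, 1)‖ := norm_pos_iff.2 hv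
  have hε : 0 < ε := half_pos hε'
  obtain ⟨r, hr, hball⟩ := Metric.eventually_nhds_iff_ball.1
    ((continuous_evalPair _).norm.continuousAt.eventually (lt_mem_nhds (half_lt_self hε')))
  set δ := min r (min u₀ (1 - u₀))
  have hδ : 0 < δ := lt_min hr (lt_min hu₀.1 (sub_pos.2 hu₀.2))
  have hδr : δ ≤ r := min_le_left _ _
  have hδu : δ ≤ u₀ := (min_le_right _ _).trans (min_le_left _ _)
  have hδu' : δ ≤ 1 - u₀ := (min_le_right _ _).trans (min_le_right _ _)
  refine not_memLp_of_le_norm_on_duffyWedge (a := u₀ - δ) (b := u₀ + δ) (by linarith) hδ hε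
    (duffyWedge_subset_unitTriangle (by linarith) (by linarith) (by linarith)) fun p hp => ?_
  have hp1 : p.2 < 1 := (mem_duffyWedge.1 hp).2.2
  have hden : 0 < 1 - p.2 := sub_pos.2 hp1
  have hψ : duffyInv p ∈ Metric.ball (u₀, 1) r := by
    rw [← ball_prod_same, Real.ball_eq_Ioo, Real.ball_eq_Ioo]
    obtain ⟨⟨h1, h2⟩, h3, h4⟩ := hp
    exact ⟨⟨by linarith, by linarith⟩, ⟨by linarith, by linarith⟩⟩
  rw [fderiv_evalPair_comp_duffyInv v hp1.ne, smul_add, smul_smul, smul_smul]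
  calc ε / (1 - p.2) ≤ ‖g (duffyInv p)‖ / (1 - p.2) := by gcongr; exact (hball _ hψ).le
    _ = ‖(1 - p.2)⁻¹ * g (duffyInv p)‖ := by
      rw [norm_mul, norm_inv, Real.norm_of_nonneg hden.le, inv_mul_eq_div]
    _ ≤ _ := norm_le_norm_smul_fst_add_smul_snd _ _

/-- For a bivariate polynomial `v` of degree at most `N` in each variable, the
composition `v ∘ ψ` with the inverse Duffy map `ψ(x,y) = (x/(1−y), y)` has
square-integrable gradient over the unit right triangle if and only if
`v = (1−y)·q + c` with `q ∈ 𝒬_{N,N−1}` and `c` constant. -/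
theorem duffy_H1_characterization (N : ℕ) (v : MvPolynomial (Fin 2) ℝ)
    (hv0 : v.degreeOf 0 ≤ N) (hv1 : v.degreeOf 1 ≤ N) :
    MemLp
        (fderiv ℝ (fun p : ℝ × ℝ => MvPolynomial.eval ![p.1 / (1 - p.2), p.2] v)) 2
        (volume.restrict {p : ℝ × ℝ | 0 ≤ p.1 ∧ 0 ≤ p.2 ∧ p.1 + p.2 ≤ 1})
      ↔ ∃ (q : MvPolynomial (Fin 2) ℝ) (c : ℝ),
          q.degreeOf 0 ≤ N ∧ q.degreeOf 1 ≤ N - 1 ∧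
          v = (1 - MvPolynomial.X 1) * q + MvPolynomial.C c := by
  change MemLp (fderiv ℝ (evalPair v ∘ duffyInv)) 2 (volume.restrict unitTriangle) ↔ _
  constructor
  · intro h
    have hzero (u : ℝ) (hu : u ∈ Ioo 0 1) : evalPair (pderiv 0 v) (u, 1) = 0 :=
      not_not.1 fun hne => not_memLp_fderiv_evalPair_comp_duffyInv hu hne h
    obtain ⟨q, hq⟩ := exists_eq_one_sub_X_mul_add_C
      (evalPair_eq_of_pderiv_eq_zero (evalPair_eq_zero_of_infinite (Ioo_infinite one_pos) hzero))
    obtain ⟨hq0, hq1⟩ := degreeOf_le_of_eq_one_sub_X_mul_add_C hq hv0 hv1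
    exact ⟨q, _, hq0, hq1, hq⟩
  · rintro ⟨q, c, -, -, hq⟩
    exact memLp_fderiv_evalPair_comp_duffyInv hq
end

section
/- Every bivariate polynomial p of total degree at most N, after the substitution p(x(1−y), y), lies in the space (1−y)·𝒬_{N,N−1} + constants, where 𝒬_{M,K} denotes polynomials of degree at most M in x and K in y. -/
open MvPolynomial Finset

private lemma duffy_mono (N : ℕ) (d : Fin 2 →₀ ℕ) (r : ℝ) (hd : d 0 + d 1 ≤ N) :
    ∃ (q : MvPolynomial (Fin 2) ℝ) (c : ℝ),
      q.degreeOf 0 ≤ N ∧ q.degreeOf 1 ≤ N - 1 ∧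
      MvPolynomial.bind₁
          ![MvPolynomial.X 0 * (1 - MvPolynomial.X 1), MvPolynomial.X 1]
          (monomial d r)
        = (1 - MvPolynomial.X 1) * q + MvPolynomial.C c := by
  have hone1 : degreeOf (1:Fin 2) (1:MvPolynomial (Fin 2) ℝ) = 0 := by
    rw [← C_1]; exact degreeOf_C _ _
  have hone1' : degreeOf (0:Fin 2) (1:MvPolynomial (Fin 2) ℝ) = 0 := by
    rw [← C_1]; exact degreeOf_C _ _
  have hX01 : degreeOf (0:Fin 2) (X 1 : MvPolynomial (Fin 2) ℝ) = 0 := by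
    simp [degreeOf_X]
  have hX11 : degreeOf (1:Fin 2) (X 1 : MvPolynomial (Fin 2) ℝ) ≤ 1 := by
    simp [degreeOf_X]
  have hX00 : degreeOf (0:Fin 2) (X 0 : MvPolynomial (Fin 2) ℝ) ≤ 1 := by
    simp [degreeOf_X]
  have hX10 : degreeOf (1:Fin 2) (X 0 : MvPolynomial (Fin 2) ℝ) = 0 := by
    simp [degreeOf_X]
  have hone : degreeOf 1 (1 - X 1 : MvPolynomial (Fin 2) ℝ) ≤ 1 := by
    refine le_trans (degreeOf_sub_le _ _ _) ?_
    simp [hone1, hX11]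
  have hone0 : degreeOf 0 (1 - X 1 : MvPolynomial (Fin 2) ℝ) ≤ 0 := by
    refine le_trans (degreeOf_sub_le _ _ _) ?_
    simp [hone1', hX01]
  have hbind : bind₁ ![X 0 * (1 - X 1), X 1] (monomial d r)
      = C r * (X 0 * (1 - X 1)) ^ (d 0) * (X 1 : MvPolynomial (Fin 2) ℝ) ^ (d 1) := by
    rw [bind₁_monomial]
    rw [show d.support.prod (fun i => (![X 0 * (1 - X 1), X 1] : Fin 2 → MvPolynomial (Fin 2) ℝ) i ^ d i)
        = ∏ i : Fin 2, (![X 0 * (1 - X 1), X 1] : Fin 2 → MvPolynomial (Fin 2) ℝ) i ^ d i from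
      Finset.prod_subset (subset_univ _) (by intro x _ hx; simp [Finsupp.notMem_support_iff.mp hx])]
    rw [Fin.prod_univ_two]
    simp only [Matrix.cons_val_zero, Matrix.cons_val_one, Matrix.head_cons]
    ring
  rcases Nat.eq_zero_or_pos (d 0) with h0 | h0
  · -- pure power of y
    set b := d 1 with hb
    refine ⟨-(C r * ∑ i ∈ range b, (X 1:MvPolynomial (Fin 2) ℝ) ^ i), r, ?_, ?_, ?_⟩
    · rw [degreeOf_neg]
      refine le_trans (degreeOf_mul_le _ _ _) ?_
      simp only [degreeOf_C, zero_add]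
      refine le_trans (degreeOf_sum_le _ _ _) ?_
      simp only [Finset.sup_le_iff]
      intro i hi
      refine le_trans (degreeOf_pow_le _ _ _) ?_
      simp [hX01]
    · rw [degreeOf_neg]
      refine le_trans (degreeOf_mul_le _ _ _) ?_
      simp only [degreeOf_C, zero_add]
      refine le_trans (degreeOf_sum_le _ _ _) ?_
      simp only [Finset.sup_le_iff]
      intro i hi
      refine le_trans (degreeOf_pow_le _ _ _) ?_
      have hib : i ≤ b - 1 := by have := mem_range.mp hi; omega
      calc i * degreeOf 1 (X 1 : MvPolynomial (Fin 2) ℝ) ≤ i * 1 :=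
            Nat.mul_le_mul_left _ hX11
        _ ≤ N - 1 := by omega
    · rw [hbind, h0]
      have geom : ((X 1:MvPolynomial (Fin 2) ℝ) ^ b - 1)
          = (X 1 - 1) * ∑ i ∈ range b, (X 1:MvPolynomial (Fin 2) ℝ) ^ i := by
        rw [mul_comm]; exact (geom_sum_mul _ _).symm
      have key : (X 1:MvPolynomial (Fin 2) ℝ) ^ b
          = (1 - X 1) * (-(∑ i ∈ range b, (X 1:MvPolynomial (Fin 2) ℝ) ^ i)) + 1 := by
        linear_combination geom
      rw [key]
      ring
  · -- d 0 = a + 1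
    obtain ⟨a, ha⟩ : ∃ a, d 0 = a + 1 := ⟨d 0 - 1, by omega⟩
    refine ⟨C r * X 0 ^ (a+1) * (1 - X 1) ^ a * X 1 ^ (d 1), 0, ?_, ?_, ?_⟩
    · have m1 := degreeOf_mul_le (0:Fin 2) (C r * X 0 ^ (a+1) * (1 - X 1) ^ a) (X 1 ^ (d 1))
      have m2 := degreeOf_mul_le (0:Fin 2) (C r * X 0 ^ (a+1)) ((1 - X 1) ^ a)
      have m3 := degreeOf_mul_le (0:Fin 2) (C r) (X 0 ^ (a+1))
      have p1 : degreeOf (0:Fin 2) ((X 0:MvPolynomial (Fin 2) ℝ) ^ (a+1)) ≤ (a+1) * 1 :=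
        le_trans (degreeOf_pow_le _ _ _) (Nat.mul_le_mul_left _ hX00)
      have p2 : degreeOf (0:Fin 2) ((1 - X 1:MvPolynomial (Fin 2) ℝ) ^ a) ≤ a * 0 :=
        le_trans (degreeOf_pow_le _ _ _) (Nat.mul_le_mul_left _ hone0)
      have p3 : degreeOf (0:Fin 2) ((X 1:MvPolynomial (Fin 2) ℝ) ^ (d 1)) ≤ d 1 * 0 :=
        le_trans (degreeOf_pow_le _ _ _) (by rw [hX01])
      have hc : degreeOf (0:Fin 2) (C r : MvPolynomial (Fin 2) ℝ) = 0 := degreeOf_C _ _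
      omega
    · have m1 := degreeOf_mul_le (1:Fin 2) (C r * X 0 ^ (a+1) * (1 - X 1) ^ a) (X 1 ^ (d 1))
      have m2 := degreeOf_mul_le (1:Fin 2) (C r * X 0 ^ (a+1)) ((1 - X 1) ^ a)
      have m3 := degreeOf_mul_le (1:Fin 2) (C r) (X 0 ^ (a+1))
      have p1 : degreeOf (1:Fin 2) ((X 0:MvPolynomial (Fin 2) ℝ) ^ (a+1)) ≤ (a+1) * 0 :=
        le_trans (degreeOf_pow_le _ _ _) (by rw [hX10])
      have p2 : degreeOf (1:Fin 2) ((1 - X 1:MvPolynomial (Fin 2) ℝ) ^ a) ≤ a * 1 :=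
        le_trans (degreeOf_pow_le _ _ _) (Nat.mul_le_mul_left _ hone)
      have p3 : degreeOf (1:Fin 2) ((X 1:MvPolynomial (Fin 2) ℝ) ^ (d 1)) ≤ d 1 * 1 :=
        le_trans (degreeOf_pow_le _ _ _) (Nat.mul_le_mul_left _ hX11)
      have hc : degreeOf (1:Fin 2) (C r : MvPolynomial (Fin 2) ℝ) = 0 := degreeOf_C _ _
      omega
    · rw [hbind, ha, map_zero, add_zero, mul_pow]
      ring

/-- Every bivariate polynomial `p` of total degree at most `N`, after the Duffy
substitution `p(x(1−y), y)`, lies in `(1−y)·𝒬_{N,N−1} + ℝ`. -/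
theorem duffy_pullback_of_total_degree (N : ℕ) (p : MvPolynomial (Fin 2) ℝ)
    (hp : p.totalDegree ≤ N) :
    ∃ (q : MvPolynomial (Fin 2) ℝ) (c : ℝ),
      q.degreeOf 0 ≤ N ∧ q.degreeOf 1 ≤ N - 1 ∧
      MvPolynomial.bind₁
          ![MvPolynomial.X 0 * (1 - MvPolynomial.X 1), MvPolynomial.X 1] p
        = (1 - MvPolynomial.X 1) * q + MvPolynomial.C c := by
  have key : ∀ s : Finset (Fin 2 →₀ ℕ), (∀ d ∈ s, d 0 + d 1 ≤ N) →
      ∃ (q : MvPolynomial (Fin 2) ℝ) (c : ℝ),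
      q.degreeOf 0 ≤ N ∧ q.degreeOf 1 ≤ N - 1 ∧
      bind₁ ![X 0 * (1 - X 1), X 1] (∑ d ∈ s, monomial d (coeff d p))
        = (1 - X 1) * q + C c := by
    intro s
    induction s using Finset.induction with
    | empty => intro _; exact ⟨0, 0, by simp, by simp, by simp⟩
    | @insert d s' hx ih =>
      intro hs
      obtain ⟨q1, c1, hq10, hq11, he1⟩ := duffy_mono N d (coeff d p) (hs d (mem_insert_self d s'))
      obtain ⟨q2, c2, hq20, hq21, he2⟩ := ih (fun e he => hs e (mem_insert_of_mem he))
      refine ⟨q1 + q2, c1 + c2, ?_, ?_, ?_⟩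
      · exact le_trans (degreeOf_add_le _ _ _) (max_le hq10 hq20)
      · exact le_trans (degreeOf_add_le _ _ _) (max_le hq11 hq21)
      · rw [Finset.sum_insert hx, map_add, he1, he2, map_add]; ring
  have hsup : ∀ d ∈ p.support, d 0 + d 1 ≤ N := by
    intro d hd
    have hs : (d.sum fun _ n => n) ≤ p.totalDegree := le_totalDegree hd
    have : (d.sum fun _ n => n) = d 0 + d 1 := by
      rw [Finsupp.sum_fintype _ _ (fun _ => rfl), Fin.sum_univ_two]
    omega
  obtain ⟨q, c, h0, h1, he⟩ := key p.support hsup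
  refine ⟨q, c, h0, h1, ?_⟩
  conv_lhs => rw [p.as_sum]
  exact he
end

section
/- Let s(x,y) = (Σ_{i+j=N} b_{ij} x^i y^j, Σ_{i+j=N} c_{ij} x^i y^j) be a homogeneous degree-N vector field with s(x,y)·(x,y) = 0, and set v₂(x,y) = Σ_{i+j=N} (−b_{ij} x^{i+1}(1−y)^i y^j + c_{ij} x^i (1−y)^i y^j). Then v₂ = Σ_{i+j=N} c_{ij} x^i (1−y)^{i−1} y^j, which is a polynomial of degree at most N in x and at most N−1 in y. -/
open Finset MvPolynomial

/-!
Write `B, C` for the binary forms with coefficients `b, c`, so that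
`v₂(x, y) = -x B(x (1 - y), y) + C(x (1 - y), y)`. Evaluating the tangency relation
`x B + y C = 0` at `(x (1 - y), y)` shows `(1 - y) v₂(x, y) = C(x (1 - y), y)`. Tangency at
`(0, 1)` gives `c₀ = 0`, so `C(x (1 - y), y)` is also `(1 - y)` times
`Σ cᵢ xⁱ (1 - y)^(i-1) y^(N-i)`. The two sides therefore agree off `y = 1`, hence everywhere by
continuity; the degree bounds are read off termwise, the `i = 0` term being zero.
-/

def binaryForm {R : Type*} [CommRing R] (N : ℕ) (a : ℕ → ℕ → R) (x y : R) : R :=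
  ∑ i ∈ range (N + 1), a i (N - i) * x ^ i * y ^ (N - i)

section BinaryForm

variable {R : Type*} [CommRing R] (N : ℕ)

theorem binaryForm_zero_left_one (a : ℕ → ℕ → R) : binaryForm N a 0 1 = a 0 N := by
  rw [binaryForm, sum_eq_single_of_mem 0 (by simp)]
  · simp
  · intro i _ hi
    simp [zero_pow hi]

theorem coeff_zero_eq_zero_of_tangent {b c : ℕ → ℕ → R}
    (htan : ∀ x y, x * binaryForm N b x y + y * binaryForm N c x y = 0) : c 0 N = 0 := by
  simpa [binaryForm_zero_left_one] using htan 0 1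

theorem mul_sum_pow_pred_eq_binaryForm {c : ℕ → ℕ → R} (hc : c 0 N = 0) (x t y : R) :
    t * ∑ i ∈ range (N + 1), c i (N - i) * x ^ i * t ^ (i - 1) * y ^ (N - i)
      = binaryForm N c (x * t) y := by
  rw [binaryForm, mul_sum]
  refine sum_congr rfl fun i _ => ?_
  rcases i with _ | i
  · simp [hc]
  · simp only [Nat.add_sub_cancel]
    ring

theorem sum_eq_neg_mul_binaryForm_add_binaryForm (b c : ℕ → ℕ → R) (x t y : R) :
    ∑ i ∈ range (N + 1),
        (-(b i (N - i)) * x ^ (i + 1) * t ^ i * y ^ (N - i)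
          + c i (N - i) * x ^ i * t ^ i * y ^ (N - i))
      = -x * binaryForm N b (x * t) y + binaryForm N c (x * t) y := by
  simp only [binaryForm, mul_sum, ← sum_add_distrib, mul_pow]
  refine sum_congr rfl fun i _ => ?_
  ring

theorem one_sub_mul_eq_binaryForm_of_tangent {b c : ℕ → ℕ → R}
    (htan : ∀ x y, x * binaryForm N b x y + y * binaryForm N c x y = 0) (x y : R) :
    (1 - y) * (-x * binaryForm N b (x * (1 - y)) y + binaryForm N c (x * (1 - y)) y)
      = binaryForm N c (x * (1 - y)) y := by
  linear_combination -htan (x * (1 - y)) y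

end BinaryForm

theorem Real.eq_of_one_sub_mul_eq {f g : ℝ → ℝ} (hf : Continuous f) (hg : Continuous g)
    (h : ∀ y, (1 - y) * f y = (1 - y) * g y) : f = g :=
  hf.ext_on (dense_compl_singleton 1) hg fun y hy =>
    mul_left_cancel₀ (sub_ne_zero.mpr (Ne.symm hy)) (h y)

namespace MvPolynomial

variable {R σ : Type*} [CommRing R]

theorem degreeOf_one_sub_X_le (j k : σ) :
    degreeOf j (1 - X k : MvPolynomial σ R) ≤ degreeOf j (X k : MvPolynomial σ R) :=
  (degreeOf_sub_le _ _ _).trans (by simp [degreeOf_one])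

theorem degreeOf_C_mul_X_pow_mul_one_sub_X_pow_mul_X_pow_le (j i k : σ) (a : R) (p q r : ℕ) :
    degreeOf j (C a * X i ^ p * (1 - X k) ^ q * X k ^ r : MvPolynomial σ R)
      ≤ p * degreeOf j (X i : MvPolynomial σ R)
        + (q + r) * degreeOf j (X k : MvPolynomial σ R) := by
  calc _ ≤ degreeOf j (C a * X i ^ p : MvPolynomial σ R)
        + degreeOf j ((1 - X k) ^ q : MvPolynomial σ R)
        + degreeOf j (X k ^ r : MvPolynomial σ R) :=
          (degreeOf_mul_le _ _ _).trans (add_le_add_left (degreeOf_mul_le _ _ _) _)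
    _ ≤ p * degreeOf j (X i : MvPolynomial σ R) + q * degreeOf j (X k : MvPolynomial σ R)
        + r * degreeOf j (X k : MvPolynomial σ R) := by
          gcongr
          · exact (degreeOf_C_mul_le _ _ _).trans (degreeOf_pow_le _ _ _)
          · exact (degreeOf_pow_le _ _ _).trans (Nat.mul_le_mul_left _ (degreeOf_one_sub_X_le j k))
          · exact degreeOf_pow_le _ _ _
    _ = _ := by ring

end MvPolynomial

/-- Let `s(x,y) = (Σ_{i+j=N} b_{ij} x^i y^j, Σ_{i+j=N} c_{ij} x^i y^j)` be a
homogeneous degree-`N` vector field with `s(x,y)·(x,y) = 0`, and let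
`v₂(x,y) = Σ_{i+j=N} (−b_{ij} x^{i+1}(1−y)^i y^j + c_{ij} x^i (1−y)^i y^j)`.
Then `v₂ = Σ_{i+j=N} c_{ij} x^i (1−y)^{i−1} y^j`, which is a polynomial of
degree at most `N` in `x` and at most `N−1` in `y`. -/
theorem nedelec_second_component (N : ℕ) (b c : ℕ → ℕ → ℝ) (v₂ : ℝ → ℝ → ℝ)
    (htan : ∀ x y : ℝ,
      x * (∑ i ∈ Finset.range (N + 1), b i (N - i) * x ^ i * y ^ (N - i))
        + y * (∑ i ∈ Finset.range (N + 1), c i (N - i) * x ^ i * y ^ (N - i))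
        = 0)
    (hv₂ : ∀ x y : ℝ,
      v₂ x y = ∑ i ∈ Finset.range (N + 1),
        (-(b i (N - i)) * x ^ (i + 1) * (1 - y) ^ i * y ^ (N - i)
          + c i (N - i) * x ^ i * (1 - y) ^ i * y ^ (N - i))) :
    (∀ x y : ℝ,
      v₂ x y = ∑ i ∈ Finset.range (N + 1),
        c i (N - i) * x ^ i * (1 - y) ^ (i - 1) * y ^ (N - i)) ∧
    ∃ q : MvPolynomial (Fin 2) ℝ,
      q.degreeOf 0 ≤ N ∧ q.degreeOf 1 ≤ N - 1 ∧
      ∀ x y : ℝ, v₂ x y = MvPolynomial.eval ![x, y] q := by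
  have hc₀ : c 0 N = 0 := coeff_zero_eq_zero_of_tangent N htan
  have hv₂_eq : ∀ x y : ℝ, v₂ x y = ∑ i ∈ range (N + 1),
      c i (N - i) * x ^ i * (1 - y) ^ (i - 1) * y ^ (N - i) := by
    intro x
    refine congrFun (Real.eq_of_one_sub_mul_eq (f := v₂ x) ?_ (by fun_prop) fun y => ?_)
    · simp only [funext (hv₂ x)]
      fun_prop
    · rw [hv₂, sum_eq_neg_mul_binaryForm_add_binaryForm,
        one_sub_mul_eq_binaryForm_of_tangent N htan, mul_sum_pow_pred_eq_binaryForm N hc₀]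
  refine ⟨hv₂_eq, ∑ i ∈ range (N + 1),
      C (c i (N - i)) * X 0 ^ i * (1 - X 1) ^ (i - 1) * X 1 ^ (N - i), ?_, ?_, fun x y => ?_⟩
  · refine (degreeOf_sum_le _ _ _).trans (Finset.sup_le fun i hi => ?_)
    refine (degreeOf_C_mul_X_pow_mul_one_sub_X_pow_mul_X_pow_le _ _ _ _ _ _ _).trans ?_
    simp only [degreeOf_X_self, degreeOf_X, zero_ne_one, ↓reduceIte, mul_one, mul_zero, add_zero]
    exact Nat.le_of_lt_succ (mem_range.mp hi)
  · refine (degreeOf_sum_le _ _ _).trans (Finset.sup_le fun i hi => ?_)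
    rcases i with _ | i
    · simp [hc₀]
    refine (degreeOf_C_mul_X_pow_mul_one_sub_X_pow_mul_X_pow_le _ _ _ _ _ _ _).trans ?_
    simp only [degreeOf_X, one_ne_zero, ↓reduceIte, add_tsub_cancel_right,
      mul_zero, mul_one, zero_add]
    grind
  · simp [hv₂_eq]
end

section
/- For a polynomial u of degree at most 2N+1 with u(x) = Σ u_i x^i, the Gauss–Lobatto quadrature with N+1 nodes satisfies Σ_{i=0}^N u(ξ_i) ρ_i = ∫_{−1}^1 u(x) dx + u_{2N} · 2^{2N+1} N ((N−1)!)² ((N+1)!)² / ((N+1)(2N+1)((2N)!)²), where u_{2N} is the coefficient of x^{2N} in u. -/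
/-!
The error functional `E = Q - ∫₋₁¹` of the rule vanishes on polynomials of degree `< 2N`, so
`E u = u_{2N} E(x^{2N}) + u_{2N+1} E(x^{2N+1})`. Put `P = ∏_{0<i<N} (x - ξᵢ)` and
`ω = (x² - 1) P²`. Both `ω` and `x ω` vanish at every node, and `ω` is monic of degree `2N` and
even, so `E(x^{2N}) = E ω = -∫ ω` and `E(x^{2N+1}) = E(x ω) = -∫ x ω = 0`.

Exactness makes `P` orthogonal to all polynomials of degree `< N - 1` for the weight `1 - x²` on
`[-1, 1]`. Monic orthogonal polynomials are unique, so `P` is the monic multiple of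
`P_N' ∝ P_{N-1}^{(1,1)}`, and, the weight being even, `P(-x) = (-1)^{N-1} P(x)`. Integrating by
parts against Rodrigues' formula reduces `-∫ ω = ∫ (1 - x²) P²` to
`∫₋₁¹ (1 - x²)^N dx = 2^{2N+1} (N!)² / (2N+1)!`.
-/

open Finset Polynomial

namespace Polynomial

variable {a b : ℝ} {p q w P Q : ℝ[X]} {n : ℕ}

noncomputable def integralₗ (a b : ℝ) : ℝ[X] →ₗ[ℝ] ℝ where
  toFun p := ∫ x in a..b, p.eval x
  map_add' p q := by
    simpa only [eval_add] using intervalIntegral.integral_add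
      (p.continuous.intervalIntegrable a b) (q.continuous.intervalIntegrable a b)
  map_smul' c p := by simp [intervalIntegral.integral_const_mul]

theorem integralₗ_apply (a b : ℝ) (p : ℝ[X]) :
    integralₗ a b p = ∫ x in a..b, p.eval x := rfl

theorem integralₗ_C_mul (a b c : ℝ) (p : ℝ[X]) :
    integralₗ a b (C c * p) = c * integralₗ a b p := by
  rw [← smul_eq_C_mul, map_smul, smul_eq_mul]

theorem integralₗ_derivative (a b : ℝ) (p : ℝ[X]) :
    integralₗ a b (derivative p) = p.eval b - p.eval a :=
  intervalIntegral.integral_eq_sub_of_hasDerivAt (fun x _ => p.hasDerivAt x)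
    ((derivative p).continuous.intervalIntegrable a b)

theorem integralₗ_derivative_mul (a b : ℝ) (p q : ℝ[X]) :
    integralₗ a b (derivative p * q) =
      (p * q).eval b - (p * q).eval a - integralₗ a b (p * derivative q) := by
  rw [eq_sub_iff_add_eq, ← map_add, ← derivative_mul, integralₗ_derivative]

theorem integralₗ_iterate_derivative_mul {k : ℕ}
    (hp : ∀ j < k, (derivative^[j] p).eval a = 0 ∧ (derivative^[j] p).eval b = 0) (q : ℝ[X]) :
    integralₗ a b (derivative^[k] p * q) = (-1) ^ k * integralₗ a b (p * derivative^[k] q) := by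
  induction k generalizing q with
  | zero => simp
  | succ k ih =>
    obtain ⟨ha, hb⟩ := hp k k.lt_succ_self
    rw [Function.iterate_succ_apply', integralₗ_derivative_mul, eval_mul, eval_mul, ha, hb,
      ih (fun j hj => hp j (by omega)), Function.iterate_succ_apply]
    ring

theorem integralₗ_comp_neg_X (a : ℝ) (p : ℝ[X]) :
    integralₗ (-a) a (p.comp (-X)) = integralₗ (-a) a p := by
  simp only [integralₗ_apply, eval_comp, eval_neg, eval_X,
    intervalIntegral.integral_comp_neg fun x => p.eval x, neg_neg]

theorem integralₗ_eq_zero_of_comp_neg_X_eq_neg (hp : p.comp (-X) = -p) :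
    integralₗ (-a) a p = 0 := by
  have h := integralₗ_comp_neg_X a p
  rw [hp, map_neg] at h
  linarith

theorem eq_zero_of_integralₗ_eq_zero (hab : a < b) (hp : ∀ x ∈ Set.Icc a b, 0 ≤ p.eval x)
    (h : integralₗ a b p = 0) : p = 0 := by
  refine eq_zero_of_infinite_isRoot p ((Set.Icc_infinite hab).mono fun x hx => ?_)
  by_contra hx'
  refine (intervalIntegral.integral_pos hab p.continuous.continuousOn
    (fun y hy => hp y (Set.Ioc_subset_Icc_self hy)) ⟨x, hx, ?_⟩).ne' h
  exact (hp x hx).lt_of_ne' hx'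

theorem coeff_eq_zero_of_comp_neg_X_eq (hp : p.comp (-X) = p) (hn : Odd n) : p.coeff n = 0 := by
  have h : (p.comp (C (-1) * X)).coeff n = p.coeff n * (-1) ^ n := comp_C_mul_X_coeff
  rw [C_neg, C_1, neg_one_mul, hp, hn.neg_one_pow] at h
  linarith

def OrthogonalToDegreeLT (a b : ℝ) (w P : ℝ[X]) (n : ℕ) : Prop :=
  ∀ q : ℝ[X], q.degree < n → integralₗ a b (w * P * q) = 0

theorem eq_C_leadingCoeff_mul_of_orthogonal (hab : a < b) (hw₀ : w ≠ 0)
    (hw : ∀ x ∈ Set.Icc a b, 0 ≤ w.eval x) (hP : P.Monic) (hPn : P.degree = n)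
    (hQn : Q.degree = n) (hPo : OrthogonalToDegreeLT a b w P n)
    (hQo : OrthogonalToDegreeLT a b w Q n) :
    Q = C Q.leadingCoeff * P := by
  have hQ₀ : Q ≠ 0 := by rintro rfl; simp at hQn
  set d := Q - C Q.leadingCoeff * P
  have hd : d.degree < n := by
    rw [← hQn]
    refine degree_sub_lt_left ?_ hQ₀ ?_
    · rw [degree_C_mul (leadingCoeff_ne_zero.mpr hQ₀), hPn, hQn]
    · rw [leadingCoeff_mul, leadingCoeff_C, hP.leadingCoeff, mul_one]
  have hdd : integralₗ a b (w * d * d) = 0 := by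
    rw [show w * d * d = w * Q * d - C Q.leadingCoeff * (w * P * d) by ring, map_sub,
      integralₗ_C_mul, hQo d hd, hPo d hd, mul_zero, sub_zero]
  have hwdd := eq_zero_of_integralₗ_eq_zero hab (fun x hx => by
    simpa [mul_assoc] using mul_nonneg (hw x hx) (mul_self_nonneg (d.eval x))) hdd
  rw [mul_assoc, mul_eq_zero, mul_self_eq_zero] at hwdd
  exact sub_eq_zero.mp (hwdd.resolve_left hw₀)

/-- For an even weight, `(-1)ᵏ P(-x)` is again monic and orthogonal, so uniqueness forces it
to be `P`. -/
theorem comp_neg_X_eq_of_orthogonal (ha : 0 < a) (hw₀ : w ≠ 0)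
    (hw : ∀ x ∈ Set.Icc (-a) a, 0 ≤ w.eval x) (hwe : w.comp (-X) = w) (hP : P.Monic)
    (hPo : OrthogonalToDegreeLT (-a) a w P P.natDegree) :
    P.comp (-X) = (-1) ^ P.natDegree * P := by
  set k := P.natDegree
  set R := (-1) ^ k * P.comp (-X)
  have hRm : R.Monic := hP.neg_one_pow_natDegree_mul_comp_neg_X
  have hRn : R.degree = k := by
    rw [degree_mul, degree_comp_neg_X, degree_eq_natDegree hP.ne_zero]; simp [k]
  have hRo : OrthogonalToDegreeLT (-a) a w R k := by
    intro q hq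
    have h : (w * R * q).comp (-X) = C ((-1) ^ k) * (w * P * q.comp (-X)) := by
      simp only [R, mul_comp_neg_X, hwe, comp_neg_X_comp_neg_X, C_pow, C_neg, C_1, pow_comp,
        neg_comp, one_comp]
      ring
    rw [← integralₗ_comp_neg_X, h, integralₗ_C_mul, hPo _ (by rwa [degree_comp_neg_X]),
      mul_zero]
  have hRP := eq_C_leadingCoeff_mul_of_orthogonal (by linarith) hw₀ hw hP
    (degree_eq_natDegree hP.ne_zero) hRn hPo hRo
  rw [hRm.leadingCoeff, C_1, one_mul] at hRP
  have hsq : ((-1) ^ k * (-1) ^ k : ℝ[X]) = 1 := by rw [← mul_pow]; simp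
  calc P.comp (-X) = (-1) ^ k * R := by rw [← mul_assoc, hsq, one_mul]
    _ = (-1) ^ k * P := by rw [hRP]

theorem integralₗ_one_sub_X_sq_pow_succ (n : ℕ) :
    (2 * n + 3) * integralₗ (-1) 1 ((1 - X ^ 2) ^ (n + 1)) =
      (2 * n + 2) * integralₗ (-1) 1 ((1 - X ^ 2) ^ n) := by
  have hderiv : derivative (X * (1 - X ^ 2) ^ (n + 1) : ℝ[X]) =
      C (2 * (n : ℝ) + 3) * (1 - X ^ 2) ^ (n + 1) - C (2 * (n : ℝ) + 2) * (1 - X ^ 2) ^ n := by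
    simp only [derivative_mul, derivative_X, derivative_pow, derivative_sub, derivative_one,
      map_add, map_mul, map_natCast, map_ofNat]
    push_cast
    ring
  have h := integralₗ_derivative (-1) 1 (X * (1 - X ^ 2) ^ (n + 1))
  rw [hderiv, map_sub, integralₗ_C_mul, integralₗ_C_mul] at h
  norm_num at h
  linarith

open Nat in
theorem integralₗ_one_sub_X_sq_pow (n : ℕ) :
    integralₗ (-1) 1 ((1 - X ^ 2) ^ n) = 2 ^ (2 * n + 1) * (n ! : ℝ) ^ 2 / (2 * n + 1)! := by
  induction n with
  | zero => simp [integralₗ_apply]; norm_num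
  | succ n ih =>
    have h : integralₗ (-1) 1 ((1 - X ^ 2) ^ (n + 1)) =
        (2 * n + 2) / (2 * n + 3) * integralₗ (-1) 1 ((1 - X ^ 2) ^ n) := by
      rw [div_mul_eq_mul_div, eq_div_iff (by positivity), mul_comm]
      exact integralₗ_one_sub_X_sq_pow_succ n
    rw [h, ih, show 2 * (n + 1) + 1 = 2 * n + 1 + 1 + 1 by ring,
      factorial_succ (2 * n + 1 + 1), factorial_succ (2 * n + 1), factorial_succ n]
    push_cast
    field_simp
    ring

theorem monic_X_sq_sub_one : (X ^ 2 - 1 : ℝ[X]).Monic := by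
  simpa using monic_X_pow_sub_C (1 : ℝ) two_ne_zero

theorem natDegree_X_sq_sub_one : (X ^ 2 - 1 : ℝ[X]).natDegree = 2 := by
  simpa using natDegree_X_pow_sub_C (n := 2) (r := (1 : ℝ))

/-- Rodrigues' formula: `rodrigues n = 2ⁿ n! Pₙ` for the Legendre polynomial `Pₙ`. -/
noncomputable def rodrigues (n : ℕ) : ℝ[X] := derivative^[n] ((X ^ 2 - 1) ^ n)

theorem iterate_derivative_X_sq_sub_one_pow_eval_eq_zero {k : ℕ} (hk : k < n) {x : ℝ}
    (hx : x ^ 2 = 1) : (derivative^[k] ((X ^ 2 - 1) ^ n : ℝ[X])).eval x = 0 := by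
  obtain ⟨g, hg⟩ := pow_sub_dvd_iterate_derivative_pow (X ^ 2 - 1 : ℝ[X]) n k
  simp [hg, hx, Nat.sub_ne_zero_of_lt hk]

open Nat in
theorem integralₗ_rodrigues_mul (hq : q.natDegree ≤ n) :
    integralₗ (-1) 1 (rodrigues n * q) =
      n ! * q.coeff n * integralₗ (-1) 1 ((1 - X ^ 2) ^ n) := by
  have hbd : ∀ j < n, (derivative^[j] ((X ^ 2 - 1) ^ n : ℝ[X])).eval (-1) = 0 ∧
      (derivative^[j] ((X ^ 2 - 1) ^ n : ℝ[X])).eval 1 = 0 := fun j hj =>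
    ⟨iterate_derivative_X_sq_sub_one_pow_eval_eq_zero hj (by norm_num),
      iterate_derivative_X_sq_sub_one_pow_eval_eq_zero hj (by norm_num)⟩
  have hDq : derivative^[n] q = C (n ! * q.coeff n) := by
    rw [eq_C_of_natDegree_le_zero ((natDegree_iterate_derivative q n).trans (by omega)),
      coeff_iterate_derivative, zero_add, descFactorial_self, nsmul_eq_mul]
  have hsign : (X ^ 2 - 1 : ℝ[X]) ^ n * C (n ! * q.coeff n) =
      C ((-1) ^ n * (n ! * q.coeff n)) * (1 - X ^ 2) ^ n := by
    rw [C_mul (a := (-1) ^ n), C_pow, C_neg, C_1,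
      show (X ^ 2 - 1 : ℝ[X]) = -1 * (1 - X ^ 2) by ring, mul_pow]
    ring
  have hsq : ((-1 : ℝ) ^ n) ^ 2 = 1 := by rw [← pow_mul, pow_mul', neg_one_sq, one_pow]
  rw [rodrigues, integralₗ_iterate_derivative_mul hbd, hDq, hsign, integralₗ_C_mul]
  linear_combination (n ! * q.coeff n * integralₗ (-1) 1 ((1 - X ^ 2) ^ n)) * hsq

theorem natDegree_rodrigues_le (n : ℕ) : (rodrigues n).natDegree ≤ n := by
  refine (natDegree_iterate_derivative _ n).trans ?_
  rw [monic_X_sq_sub_one.natDegree_pow, natDegree_X_sq_sub_one]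
  omega

open Nat in
theorem coeff_rodrigues_self (n : ℕ) : (rodrigues n).coeff n = ((2 * n)! / n ! : ℝ) := by
  have hlead : ((X ^ 2 - 1 : ℝ[X]) ^ n).coeff (2 * n) = 1 := by
    simpa [monic_X_sq_sub_one.natDegree_pow, natDegree_X_sq_sub_one, mul_comm] using
      (monic_X_sq_sub_one.pow n).coeff_natDegree
  have hfact : (n ! * (2 * n).descFactorial n : ℝ) = (2 * n)! := by
    exact_mod_cast (show 2 * n - n = n by omega) ▸
      factorial_mul_descFactorial (by omega : n ≤ 2 * n)
  rw [rodrigues, coeff_iterate_derivative, ← two_mul, hlead, nsmul_eq_mul, mul_one, ← hfact]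
  field_simp

open Nat in
theorem integralₗ_one_sub_X_sq_mul_derivative_rodrigues_mul (hq : q.natDegree ≤ n) :
    integralₗ (-1) 1 ((1 - X ^ 2) * derivative (rodrigues (n + 1)) * q) =
      (n + 2) * (n + 1)! * q.coeff n * integralₗ (-1) 1 ((1 - X ^ 2) ^ (n + 1)) := by
  set r := (1 - X ^ 2) * q
  have hr : r.natDegree ≤ n + 2 :=
    (natDegree_mul_le_of_le (by compute_degree!) hq).trans (by omega)
  have hrc : r.coeff (n + 2) = -q.coeff n := by
    simp [r, sub_mul, coeff_X_pow_mul',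
      coeff_eq_zero_of_natDegree_lt (by omega : q.natDegree < n + 2)]
  have hdr : (derivative r).natDegree ≤ n + 1 := (natDegree_derivative_le r).trans (by omega)
  have hdrc : (derivative r).coeff (n + 1) = -(n + 2) * q.coeff n := by
    rw [coeff_derivative, hrc]; push_cast; ring
  rw [show (1 - X ^ 2) * derivative (rodrigues (n + 1)) * q =
      derivative (rodrigues (n + 1)) * r by ring,
    integralₗ_derivative_mul, integralₗ_rodrigues_mul hdr, hdrc]
  simp only [r, eval_mul, eval_sub, eval_one, eval_pow, eval_X, factorial_succ n]
  push_cast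
  ring

theorem natDegree_derivative_rodrigues_le (n : ℕ) :
    (derivative (rodrigues (n + 1))).natDegree ≤ n :=
  (natDegree_derivative_le _).trans (by have := natDegree_rodrigues_le (n + 1); omega)

open Nat in
theorem coeff_derivative_rodrigues (n : ℕ) :
    (derivative (rodrigues (n + 1))).coeff n = (n + 1) * (2 * (n + 1))! / (n + 1)! := by
  rw [coeff_derivative, coeff_rodrigues_self]
  ring

theorem degree_derivative_rodrigues (n : ℕ) : (derivative (rodrigues (n + 1))).degree = n := by
  refine degree_eq_of_le_of_coeff_ne_zero (degree_le_natDegree.trans ?_) ?_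
  · exact_mod_cast natDegree_derivative_rodrigues_le n
  · rw [coeff_derivative_rodrigues]; positivity

theorem orthogonal_derivative_rodrigues (n : ℕ) :
    OrthogonalToDegreeLT (-1) 1 (1 - X ^ 2) (derivative (rodrigues (n + 1))) n := by
  intro q hq
  rw [integralₗ_one_sub_X_sq_mul_derivative_rodrigues_mul (natDegree_le_of_degree_le hq.le),
    coeff_eq_zero_of_degree_lt hq]
  ring

theorem one_sub_X_sq_ne_zero : (1 - X ^ 2 : ℝ[X]) ≠ 0 := by
  intro h
  simpa using congrArg (eval 0) h

theorem eval_one_sub_X_sq_nonneg {x : ℝ} (hx : x ∈ Set.Icc (-1) 1) :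
    0 ≤ (1 - X ^ 2 : ℝ[X]).eval x := by
  simp only [eval_sub, eval_one, eval_pow, eval_X]
  nlinarith [hx.1, hx.2]

theorem apply_eq_of_apply_X_pow_eq_zero {R : Type*} [CommSemiring R] {L : R[X] →ₗ[R] R}
    {m : ℕ} (hL : ∀ k < m, L (X ^ k) = 0) {u : R[X]} (hu : u.natDegree ≤ m + 1) :
    L u = u.coeff m * L (X ^ m) + u.coeff (m + 1) * L (X ^ (m + 1)) := by
  conv_lhs => rw [u.as_sum_range' (m + 2) (by omega)]
  simp only [map_sum, ← C_mul_X_pow_eq_monomial, ← smul_eq_C_mul, map_smul, smul_eq_mul]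
  rw [sum_range_succ, sum_range_succ,
    sum_eq_zero fun k hk => by rw [hL k (mem_range.mp hk), mul_zero], zero_add]

noncomputable def quadrature (ξ ρ : ℕ → ℝ) (m : ℕ) : ℝ[X] →ₗ[ℝ] ℝ :=
  ∑ i ∈ range m, ρ i • leval (ξ i)

theorem quadrature_apply (ξ ρ : ℕ → ℝ) (m : ℕ) (p : ℝ[X]) :
    quadrature ξ ρ m p = ∑ i ∈ range m, p.eval (ξ i) * ρ i := by
  simp [quadrature, mul_comm]

-- The rule has the `n + 2` nodes `ξ 0, …, ξ (n + 1)`; in the theorem `n = N - 1`.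
noncomputable def interiorNodePoly (ξ : ℕ → ℝ) (n : ℕ) : ℝ[X] :=
  ∏ i ∈ Ioo 0 (n + 1), (X - C (ξ i))

section Nodes

variable {ξ ρ : ℕ → ℝ}

theorem interiorNodePoly_monic : (interiorNodePoly ξ n).Monic :=
  monic_prod_of_monic _ _ fun i _ => monic_X_sub_C (ξ i)

theorem natDegree_interiorNodePoly : (interiorNodePoly ξ n).natDegree = n := by
  rw [interiorNodePoly, natDegree_prod_of_monic _ _ fun i _ => monic_X_sub_C (ξ i)]
  simp

theorem quadrature_one_sub_X_sq_mul_interiorNodePoly_mul (h0 : ξ 0 = -1) (h1 : ξ (n + 1) = 1)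
    (q : ℝ[X]) : quadrature ξ ρ (n + 2) ((1 - X ^ 2) * interiorNodePoly ξ n * q) = 0 := by
  rw [quadrature_apply]
  refine sum_eq_zero fun i hi => ?_
  have hvanish : ((1 - X ^ 2) * interiorNodePoly ξ n).eval (ξ i) = 0 := by
    obtain rfl | hi | rfl : i = 0 ∨ i ∈ Ioo 0 (n + 1) ∨ i = n + 1 := by
      simp only [mem_range, mem_Ioo] at hi ⊢; omega
    · simp [h0]
    · simp [interiorNodePoly, eval_prod, prod_eq_zero hi]
    · simp [h1]
  rw [eval_mul, hvanish, zero_mul, zero_mul]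

theorem orthogonal_interiorNodePoly (h0 : ξ 0 = -1) (h1 : ξ (n + 1) = 1)
    (hexact : ∀ p : ℝ[X], p.natDegree ≤ 2 * n + 1 →
      quadrature ξ ρ (n + 2) p = integralₗ (-1) 1 p) :
    OrthogonalToDegreeLT (-1) 1 (1 - X ^ 2) (interiorNodePoly ξ n) n := by
  intro q hq
  rcases eq_or_ne q 0 with rfl | hq₀
  · simp
  have hqn := (natDegree_lt_iff_degree_lt hq₀).mpr hq
  rw [← hexact, quadrature_one_sub_X_sq_mul_interiorNodePoly_mul h0 h1]
  refine (natDegree_mul_le_of_le (natDegree_mul_le_of_le (by compute_degree!)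
    natDegree_interiorNodePoly.le) le_rfl).trans ?_
  omega

open Nat in
theorem derivative_rodrigues_eq_C_mul_interiorNodePoly (h0 : ξ 0 = -1) (h1 : ξ (n + 1) = 1)
    (hexact : ∀ p : ℝ[X], p.natDegree ≤ 2 * n + 1 →
      quadrature ξ ρ (n + 2) p = integralₗ (-1) 1 p) :
    derivative (rodrigues (n + 1)) =
      C (((n + 1) * (2 * (n + 1))! / (n + 1)! : ℝ)) * interiorNodePoly ξ n := by
  have hQ := eq_C_leadingCoeff_mul_of_orthogonal (by norm_num) one_sub_X_sq_ne_zero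
    (fun x hx => eval_one_sub_X_sq_nonneg hx) interiorNodePoly_monic
    (by rw [degree_eq_natDegree interiorNodePoly_monic.ne_zero, natDegree_interiorNodePoly])
    (degree_derivative_rodrigues n) (orthogonal_interiorNodePoly h0 h1 hexact)
    (orthogonal_derivative_rodrigues n)
  rwa [leadingCoeff, natDegree_eq_of_degree_eq_some (degree_derivative_rodrigues n),
    coeff_derivative_rodrigues] at hQ

theorem interiorNodePoly_comp_neg_X (h0 : ξ 0 = -1) (h1 : ξ (n + 1) = 1)
    (hexact : ∀ p : ℝ[X], p.natDegree ≤ 2 * n + 1 →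
      quadrature ξ ρ (n + 2) p = integralₗ (-1) 1 p) :
    (interiorNodePoly ξ n).comp (-X) = (-1) ^ n * interiorNodePoly ξ n := by
  have h := comp_neg_X_eq_of_orthogonal one_pos one_sub_X_sq_ne_zero
    (fun x hx => eval_one_sub_X_sq_nonneg hx) (by simp) interiorNodePoly_monic
    (by rw [natDegree_interiorNodePoly]; exact orthogonal_interiorNodePoly h0 h1 hexact)
  rwa [natDegree_interiorNodePoly] at h

open Nat in
theorem integralₗ_one_sub_X_sq_mul_interiorNodePoly_sq (h0 : ξ 0 = -1) (h1 : ξ (n + 1) = 1)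
    (hexact : ∀ p : ℝ[X], p.natDegree ≤ 2 * n + 1 →
      quadrature ξ ρ (n + 2) p = integralₗ (-1) 1 p) :
    integralₗ (-1) 1 ((1 - X ^ 2) * interiorNodePoly ξ n * interiorNodePoly ξ n) =
      2 ^ (2 * n + 3) * (n + 1) * (n ! : ℝ) ^ 2 * ((n + 2)! : ℝ) ^ 2 /
        ((n + 2) * (2 * n + 3) * ((2 * n + 2)! : ℝ) ^ 2) := by
  set P := interiorNodePoly ξ n
  set c : ℝ := (n + 1) * (2 * (n + 1))! / (n + 1)!
  have hnorm := integralₗ_one_sub_X_sq_mul_derivative_rodrigues_mul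
    (natDegree_derivative_rodrigues_le n)
  rw [coeff_derivative_rodrigues, derivative_rodrigues_eq_C_mul_interiorNodePoly h0 h1 hexact,
    show (1 - X ^ 2) * (C c * P) * (C c * P) = C (c * c) * ((1 - X ^ 2) * P * P) by
      rw [C_mul]; ring,
    integralₗ_C_mul, integralₗ_one_sub_X_sq_pow] at hnorm
  have hc : c ≠ 0 := by positivity
  rw [← mul_right_inj' (mul_ne_zero hc hc), hnorm]
  simp only [c, show 2 * (n + 1) = 2 * n + 2 by ring, show 2 * n + 2 + 1 = 2 * n + 3 by ring,
    factorial_succ (2 * n + 2), factorial_succ (n + 1), factorial_succ n]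
  push_cast
  field_simp
  ring

theorem monic_X_sq_sub_one_mul_interiorNodePoly_sq :
    ((X ^ 2 - 1) * interiorNodePoly ξ n ^ 2).Monic :=
  monic_X_sq_sub_one.mul (interiorNodePoly_monic.pow 2)

theorem natDegree_X_sq_sub_one_mul_interiorNodePoly_sq :
    ((X ^ 2 - 1) * interiorNodePoly ξ n ^ 2).natDegree = 2 * n + 2 := by
  rw [monic_X_sq_sub_one.natDegree_mul (interiorNodePoly_monic.pow 2),
    interiorNodePoly_monic.natDegree_pow, natDegree_X_sq_sub_one, natDegree_interiorNodePoly]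
  ring

theorem coeff_X_sq_sub_one_mul_interiorNodePoly_sq :
    ((X ^ 2 - 1) * interiorNodePoly ξ n ^ 2).coeff (2 * n + 2) = 1 :=
  natDegree_X_sq_sub_one_mul_interiorNodePoly_sq (ξ := ξ) ▸
    monic_X_sq_sub_one_mul_interiorNodePoly_sq.coeff_natDegree

theorem quadrature_sub_integralₗ_X_pow_eq_zero
    (hexact : ∀ p : ℝ[X], p.natDegree ≤ 2 * n + 1 →
      quadrature ξ ρ (n + 2) p = integralₗ (-1) 1 p)
    {k : ℕ} (hk : k < 2 * n + 2) :
    (quadrature ξ ρ (n + 2) - integralₗ (-1) 1) (X ^ k) = 0 := by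
  rw [LinearMap.sub_apply, hexact _ (by rw [natDegree_X_pow]; omega), sub_self]

theorem quadrature_sub_integralₗ_X_pow_eq (h0 : ξ 0 = -1) (h1 : ξ (n + 1) = 1)
    (hexact : ∀ p : ℝ[X], p.natDegree ≤ 2 * n + 1 →
      quadrature ξ ρ (n + 2) p = integralₗ (-1) 1 p) :
    (quadrature ξ ρ (n + 2) - integralₗ (-1) 1) (X ^ (2 * n + 2)) =
      integralₗ (-1) 1 ((1 - X ^ 2) * interiorNodePoly ξ n * interiorNodePoly ξ n) := by
  set P := interiorNodePoly ξ n
  have hωn : ((X ^ 2 - 1) * P ^ 2).natDegree ≤ 2 * n + 2 + 1 :=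
    natDegree_X_sq_sub_one_mul_interiorNodePoly_sq.le.trans (Nat.le_succ _)
  have h := apply_eq_of_apply_X_pow_eq_zero
    (fun k hk => quadrature_sub_integralₗ_X_pow_eq_zero hexact hk) hωn
  rw [coeff_X_sq_sub_one_mul_interiorNodePoly_sq, coeff_eq_zero_of_natDegree_lt
    (natDegree_X_sq_sub_one_mul_interiorNodePoly_sq.trans_lt (Nat.lt_succ_self _)), one_mul,
    zero_mul, add_zero, LinearMap.sub_apply,
    show (X ^ 2 - 1) * P ^ 2 = (1 - X ^ 2) * P * -P by ring,
    quadrature_one_sub_X_sq_mul_interiorNodePoly_mul h0 h1, mul_neg, map_neg] at h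
  rw [← h, zero_sub, neg_neg]

theorem quadrature_sub_integralₗ_X_pow_succ_eq_zero (h0 : ξ 0 = -1) (h1 : ξ (n + 1) = 1)
    (hexact : ∀ p : ℝ[X], p.natDegree ≤ 2 * n + 1 →
      quadrature ξ ρ (n + 2) p = integralₗ (-1) 1 p) :
    (quadrature ξ ρ (n + 2) - integralₗ (-1) 1) (X ^ (2 * n + 3)) = 0 := by
  set P := interiorNodePoly ξ n
  set ω := (X ^ 2 - 1) * P ^ 2
  have hωe : ω.comp (-X) = ω := by
    simp [ω, P, interiorNodePoly_comp_neg_X h0 h1 hexact, mul_pow, ← pow_mul]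
  have hXω : (X * ω).natDegree ≤ 2 * n + 2 + 1 :=
    natDegree_mul_le_of_le natDegree_X_le natDegree_X_sq_sub_one_mul_interiorNodePoly_sq.le
      |>.trans (by omega)
  have hquad : quadrature ξ ρ (n + 2) (X * ω) = 0 := by
    rw [show X * ω = (1 - X ^ 2) * P * -(X * P) by ring]
    exact quadrature_one_sub_X_sq_mul_interiorNodePoly_mul h0 h1 _
  have hint : integralₗ (-1) 1 (X * ω) = 0 :=
    integralₗ_eq_zero_of_comp_neg_X_eq_neg (by rw [mul_comp_neg_X, hωe, X_comp, neg_mul])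
  have h := apply_eq_of_apply_X_pow_eq_zero
    (fun k hk => quadrature_sub_integralₗ_X_pow_eq_zero hexact hk) hXω
  rw [coeff_X_mul, coeff_X_mul, coeff_X_sq_sub_one_mul_interiorNodePoly_sq,
    coeff_eq_zero_of_comp_neg_X_eq hωe ⟨n, rfl⟩, zero_mul, zero_add, one_mul,
    LinearMap.sub_apply, hquad, hint, sub_zero] at h
  exact h.symm

end Nodes

end Polynomial

theorem gauss_lobatto_aliasing_general (N : ℕ) (hN : 1 ≤ N)
    (ξ ρ : ℕ → ℝ)
    (hfirst : ξ 0 = -1) (hlast : ξ N = 1)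
    (hexact : ∀ u : Polynomial ℝ, u.natDegree ≤ 2 * N - 1 →
      (∫ x in (-1:ℝ)..1, u.eval x)
        = ∑ i ∈ Finset.range (N + 1), u.eval (ξ i) * ρ i)
    (u : Polynomial ℝ) (hu : u.natDegree ≤ 2 * N + 1) :
    ∑ i ∈ Finset.range (N + 1), u.eval (ξ i) * ρ i
      = (∫ x in (-1:ℝ)..1, u.eval x)
        + u.coeff (2 * N) *
          (2 ^ (2 * N + 1) * N * ((N - 1).factorial : ℝ) ^ 2
              * ((N + 1).factorial : ℝ) ^ 2)
          / ((N + 1) * (2 * N + 1) * ((2 * N).factorial : ℝ) ^ 2) := by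
  obtain ⟨n, rfl⟩ : ∃ n, N = n + 1 := ⟨N - 1, by omega⟩
  have hexact' : ∀ p : ℝ[X], p.natDegree ≤ 2 * n + 1 →
      quadrature ξ ρ (n + 2) p = integralₗ (-1) 1 p := fun p hp => by
    rw [quadrature_apply, integralₗ_apply]
    exact (hexact p (by omega)).symm
  have h := apply_eq_of_apply_X_pow_eq_zero
    (fun k hk => quadrature_sub_integralₗ_X_pow_eq_zero hexact' hk)
    (show u.natDegree ≤ 2 * n + 2 + 1 by omega)
  rw [quadrature_sub_integralₗ_X_pow_eq hfirst hlast hexact',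
    quadrature_sub_integralₗ_X_pow_succ_eq_zero hfirst hlast hexact',
    integralₗ_one_sub_X_sq_mul_interiorNodePoly_sq hfirst hlast hexact', LinearMap.sub_apply,
    quadrature_apply, integralₗ_apply] at h
  rw [← sub_eq_iff_eq_add', h, show 2 * (n + 1) = 2 * n + 2 by ring, Nat.add_sub_cancel]
  push_cast
  ring

/-- Aliasing formula for the `(N+1)`-point Gauss–Lobatto quadrature
(characterized by nodes `±1`, strictly increasing nodes, and exactness for
polynomials of degree `≤ 2N−1`): for any polynomial `u` of degree at most
`2N+1`,
`Σ u(ξ_i) ρ_i = ∫_{−1}^1 u + u_{2N}·2^{2N+1} N ((N−1)!)²((N+1)!)² / ((N+1)(2N+1)((2N)!)²)`,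
where `u_{2N}` is the coefficient of `x^{2N}` in `u`. -/
theorem gauss_lobatto_aliasing (N : ℕ) (hN : 1 ≤ N)
    (ξ ρ : ℕ → ℝ)
    (hfirst : ξ 0 = -1) (hlast : ξ N = 1)
    (hmono : ∀ i < N, ξ i < ξ (i + 1))
    (hexact : ∀ u : Polynomial ℝ, u.natDegree ≤ 2 * N - 1 →
      (∫ x in (-1:ℝ)..1, u.eval x)
        = ∑ i ∈ Finset.range (N + 1), u.eval (ξ i) * ρ i)
    (u : Polynomial ℝ) (hu : u.natDegree ≤ 2 * N + 1) :
    ∑ i ∈ Finset.range (N + 1), u.eval (ξ i) * ρ i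
      = (∫ x in (-1:ℝ)..1, u.eval x)
        + u.coeff (2 * N) *
          (2 ^ (2 * N + 1) * N * ((N - 1).factorial : ℝ) ^ 2
              * ((N + 1).factorial : ℝ) ^ 2)
          / ((N + 1) * (2 * N + 1) * ((2 * N).factorial : ℝ) ^ 2) :=
  gauss_lobatto_aliasing_general N hN ξ ρ hfirst hlast hexact u hu
end

section
/- Let Φ_i(x) = (1+x) P_i^{(0,3)}(x) for 0 ≤ i ≤ N−1 and Φ_N(x) = P_N^{(0,2)}(x). Then the family {Φ_i}_{i=0}^N is orthogonal in the weighted inner product (u,v) ↦ ∫_{−1}^1 u(x) v(x) (1+x) dx, with ‖Φ_i‖² = 8/(i+2) for i ≤ N−1 and ‖Φ_N‖² = 2. -/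
open Finset Real

/-- The classical Jacobi polynomial `P_n^{(a,b)}`, defined via its expansion
around `x = 1`. -/
noncomputable def jacobiP (a b : ℝ) (n : ℕ) : Polynomial ℝ :=
  Polynomial.C (Real.Gamma ((n : ℝ) + a + 1) /
      ((n.factorial : ℝ) * Real.Gamma ((n : ℝ) + a + b + 1))) *
    ∑ k ∈ Finset.range (n + 1),
      Polynomial.C ((n.choose k : ℝ) * Real.Gamma ((n : ℝ) + (k : ℝ) + a + b + 1)
          / (2 ^ k * Real.Gamma ((k : ℝ) + a + 1))) *
        (Polynomial.X - 1) ^ k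

/-- The basis `Φ_i = (1+x) P_i^{(0,3)}` for `i ≤ N−1`, `Φ_N = P_N^{(0,2)}`. -/
noncomputable def Phi (N i : ℕ) : Polynomial ℝ :=
  if i = N then jacobiP 0 2 N else (Polynomial.X + 1) * jacobiP 0 3 i

open Polynomial fwdDiff Nat

/-!
For `b : ℕ`, expanding `P_n^{(0,b)}` around `x = 1` and integrating termwise against `(1+x)^c`
reduces the moments of `P_n^{(0,b)}` to alternating binomial sums `∑ (-1)^k C(n,k) (a+k)!/(c+k)!`.
These are `n`-th forward differences of `g_{a,c} k = (a+k)!/(c+k)!`, and since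
`Δ g_{a,c} = (a-c) g_{a,c+1}` they evaluate to a rising factorial. That rising
factorial vanishes for `b ≤ c < n + b`: `P_n^{(0,b)}` is orthogonal to all polynomials of degree
`< n` for the weight `(1+x)^b`. In a squared norm, only the leading coefficient (weight `(1+x)^b`)
or the value at `-1` (weight `(1+x)^(b-1)`) of one factor then survives, which gives
`‖(1+x) P_i^{(0,3)}‖² = 2⁴/(2i+4)` and `‖P_N^{(0,2)}‖² = 2²/2`.
-/

theorem fwdDiff_factorial_div (a c : ℕ) :
    Δ_[1] (fun k : ℕ => ((a + k)! : ℝ) / (c + k)!) =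
      ((a : ℝ) - c) • fun k => ((a + k)! : ℝ) / (c + 1 + k)! := by
  ext k
  simp only [fwdDiff, Pi.smul_apply, smul_eq_mul]
  rw [← add_assoc, ← add_assoc, add_right_comm c 1 k, factorial_succ (a + k),
    factorial_succ (c + k)]
  push_cast
  field_simp
  ring

theorem fwdDiff_iter_factorial_div (a c n : ℕ) :
    (Δ_[1])^[n] (fun k : ℕ => ((a + k)! : ℝ) / (c + k)!) =
      (descPochhammer ℝ n).eval ((a : ℝ) - c) • fun k => ((a + k)! : ℝ) / (c + n + k)! := by
  induction n with
  | zero => simp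
  | succ n ih =>
    rw [Function.iterate_succ_apply', ih, fwdDiff_const_smul, fwdDiff_factorial_div,
      smul_smul, descPochhammer_succ_eval]
    push_cast
    ring_nf

theorem sum_range_neg_one_pow_mul_choose_mul_factorial_div (a c n : ℕ) :
    ∑ k ∈ range (n + 1), (-1 : ℝ) ^ k * n.choose k * ((a + k)! / (c + k)!) =
      a ! * (ascPochhammer ℝ n).eval ((c : ℝ) - a) / (c + n)! := by
  have h := congrFun (fwdDiff_iter_factorial_div a c n) 0
  rw [fwdDiff_iter_eq_sum_shift] at h
  rw [← neg_sub, ascPochhammer_eval_neg_eq_descPochhammer]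
  simp only [Int.reduceNeg, smul_eq_mul, mul_one, zero_add, zsmul_eq_mul, Int.cast_mul,
    Int.cast_pow, Int.cast_neg, Int.cast_one, Int.cast_natCast, Pi.smul_apply, add_zero] at h
  rw [mul_left_comm, mul_div_assoc, mul_comm (a ! : ℝ), mul_div_assoc, ← h, mul_sum]
  refine sum_congr rfl fun k hk => ?_
  obtain ⟨j, rfl⟩ := Nat.exists_eq_add_of_le (mem_range_succ_iff.mp hk)
  rw [Nat.add_sub_cancel_left, pow_add]
  ring_nf
  simp

theorem integral_one_add_pow (m : ℕ) :
    ∫ x in (-1 : ℝ)..1, (1 + x) ^ m = 2 ^ (m + 1) / (m + 1) := by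
  rw [intervalIntegral.integral_comp_add_left (· ^ m)]
  norm_num [integral_pow]

theorem integral_sub_one_pow_mul_one_add_pow (k c : ℕ) :
    ∫ x in (-1 : ℝ)..1, (x - 1) ^ k * (1 + x) ^ c =
      (-1) ^ k * 2 ^ (k + c + 1) * k ! * c ! / (k + c + 1)! := by
  have hexpand (x : ℝ) : (x - 1) ^ k * (1 + x) ^ c =
      ∑ j ∈ range (k + 1),
        (-1) ^ k * 2 ^ (k - j) * ((-1) ^ j * k.choose j * (1 + x) ^ (c + j)) := by
    rw [show x - 1 = (1 + x) - 2 by ring, sub_pow, sum_mul]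
    refine sum_congr rfl fun j _ => ?_
    ring
  have hterm (j : ℕ) (hj : j ∈ range (k + 1)) :
      ∫ x in (-1 : ℝ)..1, (-1) ^ k * 2 ^ (k - j) * ((-1) ^ j * k.choose j * (1 + x) ^ (c + j)) =
        (-1) ^ k * 2 ^ (k + c + 1) * ((-1) ^ j * k.choose j * ((c + j)! / (c + 1 + j)!)) := by
    rw [intervalIntegral.integral_const_mul, intervalIntegral.integral_const_mul,
      integral_one_add_pow, add_right_comm c 1 j, factorial_succ (c + j)]
    obtain ⟨i, rfl⟩ := Nat.exists_eq_add_of_le (mem_range_succ_iff.mp hj)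
    rw [Nat.add_sub_cancel_left]
    push_cast
    field_simp
    ring
  simp_rw [hexpand]
  rw [intervalIntegral.integral_finsetSum fun j _ =>
      Continuous.intervalIntegrable (by fun_prop) _ _,
    sum_congr rfl hterm, ← mul_sum, sum_range_neg_one_pow_mul_choose_mul_factorial_div]
  push_cast
  rw [add_sub_cancel_left, ascPochhammer_eval_one, add_right_comm c 1 k, add_comm c k]
  field_simp

theorem jacobiP_zero_natCast (b n : ℕ) :
    jacobiP 0 b n = ∑ k ∈ range (n + 1),
      C (n.choose k * ((n + b + k)! : ℝ) / (2 ^ k * k ! * (n + b)!)) * (X - 1) ^ k := by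
  have hGamma (m : ℕ) (y : ℝ) (hy : y = m) : Gamma (y + 1) = m ! := by
    rw [hy, Gamma_nat_eq_factorial]
  rw [jacobiP, mul_sum]
  refine sum_congr rfl fun k _ => ?_
  rw [← mul_assoc, ← C_mul, hGamma n _ (by ring), hGamma (n + b) _ (by push_cast; ring),
    hGamma (n + b + k) _ (by push_cast; ring), hGamma k _ (by ring)]
  congr 2
  field_simp

theorem isMonicOfDegree_X_sub_one_pow {R : Type*} [Ring R] [Nontrivial R] (k : ℕ) :
    IsMonicOfDegree ((X - 1 : R[X]) ^ k) k := by
  simpa using (isMonicOfDegree_X_sub_one (1 : R)).pow k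

theorem natDegree_jacobiP_le (b n : ℕ) : (jacobiP 0 b n).natDegree ≤ n := by
  rw [jacobiP_zero_natCast]
  refine natDegree_sum_le_of_forall_le _ _ fun k hk => (natDegree_C_mul_le _ _).trans ?_
  rw [(isMonicOfDegree_X_sub_one_pow k).natDegree_eq]
  exact mem_range_succ_iff.mp hk

theorem coeff_jacobiP_self (b n : ℕ) :
    (jacobiP 0 b n).coeff n = (2 * n + b)! / (2 ^ n * n ! * (n + b)!) := by
  rw [jacobiP_zero_natCast, finsetSum_coeff, sum_range_succ, sum_eq_zero fun k hk => ?_]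
  · have h := isMonicOfDegree_X_sub_one_pow (R := ℝ) n
    have hcoeff : ((X - 1 : ℝ[X]) ^ n).coeff n = 1 := by
      simpa [h.natDegree_eq] using h.monic.coeff_natDegree
    rw [coeff_C_mul, hcoeff]
    simp [two_mul, add_right_comm n n b]
  · rw [coeff_C_mul, coeff_eq_zero_of_natDegree_lt, mul_zero]
    rw [(isMonicOfDegree_X_sub_one_pow k).natDegree_eq]
    exact mem_range.mp hk

theorem natDegree_jacobiP (b n : ℕ) : (jacobiP 0 b n).natDegree = n :=
  natDegree_eq_of_le_of_coeff_ne_zero (natDegree_jacobiP_le b n)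
    (by rw [coeff_jacobiP_self]; positivity)

theorem leadingCoeff_jacobiP (b n : ℕ) :
    (jacobiP 0 b n).leadingCoeff = (2 * n + b)! / (2 ^ n * n ! * (n + b)!) := by
  rw [leadingCoeff, natDegree_jacobiP, coeff_jacobiP_self]

theorem eval_jacobiP_neg_one (b n : ℕ) :
    (jacobiP 0 b n).eval (-1) = (-1) ^ n * (n + b).choose b := by
  have hterm (k : ℕ) (_ : k ∈ range (n + 1)) :
      (C (n.choose k * ((n + b + k)! : ℝ) / (2 ^ k * k ! * (n + b)!)) * (X - 1) ^ k).eval (-1) =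
        ((n + b)! : ℝ)⁻¹ * ((-1) ^ k * n.choose k * ((n + b + k)! / (0 + k)!)) := by
    rw [eval_mul, eval_C, eval_pow, eval_sub, eval_X, eval_one,
      show (-1 - 1 : ℝ) = -1 * 2 by ring, mul_pow, zero_add]
    field_simp
  rw [jacobiP_zero_natCast, eval_finsetSum, sum_congr rfl hterm, ← mul_sum,
    sum_range_neg_one_pow_mul_choose_mul_factorial_div]
  push_cast
  rw [zero_sub, ascPochhammer_eval_neg_eq_descPochhammer, ← cast_add,
    descPochhammer_eval_eq_descFactorial, descFactorial_eq_factorial_mul_choose,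
    choose_symm_add, zero_add]
  push_cast
  field_simp

theorem integral_jacobiP_mul_one_add_pow (b n c : ℕ) :
    ∫ x in (-1 : ℝ)..1, (jacobiP 0 b n).eval x * (1 + x) ^ c =
      2 ^ (c + 1) * c ! * (ascPochhammer ℝ n).eval ((c : ℝ) + 1 - n - b) / (n + c + 1)! := by
  have hterm (k : ℕ) (_ : k ∈ range (n + 1)) :
      ∫ x in (-1 : ℝ)..1,
          (C (n.choose k * ((n + b + k)! : ℝ) / (2 ^ k * k ! * (n + b)!)) * (X - 1) ^ k).eval x *
            (1 + x) ^ c =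
        2 ^ (c + 1) * c ! / (n + b)! *
          ((-1) ^ k * n.choose k * ((n + b + k)! / (c + 1 + k)!)) := by
    simp only [eval_mul, eval_C, eval_pow, eval_sub, eval_X, eval_one, mul_assoc]
    rw [intervalIntegral.integral_const_mul, integral_sub_one_pow_mul_one_add_pow,
      add_right_comm c 1 k, add_comm c k]
    field_simp
    ring
  rw [jacobiP_zero_natCast]
  simp_rw [eval_finsetSum, sum_mul]
  rw [intervalIntegral.integral_finsetSum fun k _ =>
      Continuous.intervalIntegrable (by fun_prop) _ _,
    sum_congr rfl hterm, ← mul_sum, sum_range_neg_one_pow_mul_choose_mul_factorial_div]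
  push_cast
  rw [sub_add_eq_sub_sub, show c + 1 + n = n + c + 1 by ring]
  field_simp

theorem integral_jacobiP_mul_one_add_pow_eq_zero {b n c : ℕ} (hbc : b ≤ c) (hcn : c < n + b) :
    ∫ x in (-1 : ℝ)..1, (jacobiP 0 b n).eval x * (1 + x) ^ c = 0 := by
  have hroot : (c : ℝ) + 1 - n - b = -((n + b - (c + 1) : ℕ) : ℝ) := by
    rw [cast_sub (by omega)]
    push_cast
    ring
  rw [integral_jacobiP_mul_one_add_pow, hroot, ascPochhammer_eval_neg_coe_nat_of_lt (by omega),
    mul_zero, zero_div]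

theorem eval_eq_sum_range_taylor {R : Type*} [CommRing R] (p : R[X]) (r x : R) :
    p.eval x = ∑ m ∈ range (p.natDegree + 1), (taylor r p).coeff m * (x - r) ^ m := by
  rw [← natDegree_taylor p r, ← eval_eq_sum_range, taylor_eval, sub_add_cancel]

theorem integral_eval_mul_jacobiP_mul_one_add_pow (p : ℝ[X]) (b n c : ℕ) :
    ∫ x in (-1 : ℝ)..1, p.eval x * (jacobiP 0 b n).eval x * (1 + x) ^ c =
      ∑ m ∈ range (p.natDegree + 1), (taylor (-1) p).coeff m *
        ∫ x in (-1 : ℝ)..1, (jacobiP 0 b n).eval x * (1 + x) ^ (c + m) := by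
  have hexpand (x : ℝ) : p.eval x * (jacobiP 0 b n).eval x * (1 + x) ^ c =
      ∑ m ∈ range (p.natDegree + 1),
        (taylor (-1) p).coeff m * ((jacobiP 0 b n).eval x * (1 + x) ^ (c + m)) := by
    rw [eval_eq_sum_range_taylor p (-1), sum_mul, sum_mul]
    refine sum_congr rfl fun m _ => ?_
    rw [sub_neg_eq_add, add_comm x, pow_add]
    ring
  simp_rw [hexpand]
  rw [intervalIntegral.integral_finsetSum fun m _ =>
    Continuous.intervalIntegrable (by fun_prop) _ _]
  simp_rw [intervalIntegral.integral_const_mul]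

theorem integral_eval_mul_jacobiP_mul_one_add_pow_eq_zero {p : ℝ[X]} {n : ℕ}
    (hp : p.natDegree < n) (b : ℕ) :
    ∫ x in (-1 : ℝ)..1, p.eval x * (jacobiP 0 b n).eval x * (1 + x) ^ b = 0 := by
  rw [integral_eval_mul_jacobiP_mul_one_add_pow]
  refine sum_eq_zero fun m hm => ?_
  rw [integral_jacobiP_mul_one_add_pow_eq_zero (by omega) (by simp at hm; omega), mul_zero]

theorem integral_jacobiP_sq_mul_one_add_pow (b n : ℕ) :
    ∫ x in (-1 : ℝ)..1, (jacobiP 0 b n).eval x ^ 2 * (1 + x) ^ b =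
      (2 : ℝ) ^ (b + 1) / (2 * n + b + 1) := by
  simp_rw [sq]
  rw [integral_eval_mul_jacobiP_mul_one_add_pow, sum_range_succ, sum_eq_zero fun m hm => ?_,
    zero_add, coeff_taylor_natDegree, leadingCoeff_jacobiP, natDegree_jacobiP,
    integral_jacobiP_mul_one_add_pow]
  · rw [show ((b + n : ℕ) : ℝ) + 1 - n - b = 1 by push_cast; ring, ascPochhammer_eval_one,
      show n + (b + n) + 1 = 2 * n + b + 1 by ring, factorial_succ, add_comm b n, pow_add, pow_succ]
    push_cast
    field_simp
    ring
  · rw [natDegree_jacobiP] at hm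
    rw [integral_jacobiP_mul_one_add_pow_eq_zero (by omega) (by simp at hm; omega), mul_zero]

theorem integral_jacobiP_add_one_sq_mul_one_add_pow (b n : ℕ) :
    ∫ x in (-1 : ℝ)..1, (jacobiP 0 ((b : ℝ) + 1) n).eval x ^ 2 * (1 + x) ^ b =
      (2 : ℝ) ^ (b + 1) / (b + 1) := by
  simp_rw [sq]
  rw [← cast_add_one, integral_eval_mul_jacobiP_mul_one_add_pow, sum_range_succ',
    sum_eq_zero fun m hm => ?_, zero_add, taylor_coeff_zero, eval_jacobiP_neg_one, add_zero,
    integral_jacobiP_mul_one_add_pow]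
  · have hfact : (((n + (b + 1)).choose (b + 1) * n ! * (b + 1)! : ℕ) : ℝ) = (n + b + 1)! :=
      congrArg _ (add_choose_mul_factorial_mul_factorial n (b + 1))
    have hchoose : ((n + (b + 1)).choose (b + 1) : ℝ) ≠ 0 :=
      cast_ne_zero.mpr (choose_pos (by omega)).ne'
    rw [show (b : ℝ) + 1 - n - (b + 1 : ℕ) = -n by push_cast; ring,
      ascPochhammer_eval_neg_eq_descPochhammer, descPochhammer_eval_eq_descFactorial,
      descFactorial_self, ← hfact, factorial_succ]
    push_cast
    field_simp
    rw [← pow_mul, mul_comm, pow_mul, neg_one_sq, one_pow]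
  · rw [natDegree_jacobiP] at hm
    rw [integral_jacobiP_mul_one_add_pow_eq_zero (by omega) (by simp at hm; omega), mul_zero]

theorem Phi_orthogonality_general (N : ℕ) :
    (∀ i ≤ N, ∀ j ≤ N, i ≠ j →
      (∫ x in (-1:ℝ)..1, (Phi N i).eval x * (Phi N j).eval x * (1 + x)) = 0) ∧
    (∀ i < N,
      (∫ x in (-1:ℝ)..1, (Phi N i).eval x ^ 2 * (1 + x)) = 8 / ((i : ℝ) + 2)) ∧
    (∫ x in (-1:ℝ)..1, (Phi N N).eval x ^ 2 * (1 + x)) = 2 := by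
  have hX (p : ℝ[X]) (x : ℝ) : ((X + 1) * p).eval x = (1 + x) * p.eval x := by
    simp [add_comm]
  have horth (i j : ℕ) (hij : i < j) (hjN : j ≤ N) :
      ∫ x in (-1:ℝ)..1, (Phi N i).eval x * (Phi N j).eval x * (1 + x) = 0 := by
    have hiN : i ≠ N := (hij.trans_le hjN).ne
    have hdeg : (jacobiP 0 (3 : ℕ) i).natDegree < j := (natDegree_jacobiP 3 i).trans_lt hij
    rcases hjN.lt_or_eq with hjN | rfl
    · have h := integral_eval_mul_jacobiP_mul_one_add_pow_eq_zero hdeg 3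
      simp only [Phi, if_neg hiN, if_neg hjN.ne, hX, cast_ofNat] at h ⊢
      refine (intervalIntegral.integral_congr fun x _ => ?_).trans h
      ring
    · have h := integral_eval_mul_jacobiP_mul_one_add_pow_eq_zero hdeg 2
      simp only [Phi, if_neg hiN, ↓reduceIte, hX, cast_ofNat] at h ⊢
      refine (intervalIntegral.integral_congr fun x _ => ?_).trans h
      ring
  refine ⟨fun i hi j hj hij => ?_, fun i hi => ?_, ?_⟩
  · rcases hij.lt_or_gt with h | h
    · exact horth i j h hj
    · rw [← horth j i h hi]
      exact intervalIntegral.integral_congr fun x _ => by ring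
  · have h := integral_jacobiP_sq_mul_one_add_pow 3 i
    simp only [Phi, if_neg hi.ne, hX]
    simp only [cast_ofNat] at h
    refine (intervalIntegral.integral_congr fun x _ => ?_).trans (h.trans ?_)
    · ring
    · field_simp
      ring
  · have h := integral_jacobiP_add_one_sq_mul_one_add_pow 1 N
    norm_num at h
    simpa [Phi] using h

/-- The family `{Φ_i}_{i=0}^N` is orthogonal in the inner product
`(u,v) ↦ ∫_{−1}^1 u v (1+x) dx`, with `‖Φ_i‖² = 8/(i+2)` for `i ≤ N−1` and
`‖Φ_N‖² = 2`. -/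
theorem Phi_orthogonality (N : ℕ) (hN : 1 ≤ N) :
    (∀ i ≤ N, ∀ j ≤ N, i ≠ j →
      (∫ x in (-1:ℝ)..1, (Phi N i).eval x * (Phi N j).eval x * (1 + x)) = 0) ∧
    (∀ i < N,
      (∫ x in (-1:ℝ)..1, (Phi N i).eval x ^ 2 * (1 + x)) = 8 / ((i : ℝ) + 2)) ∧
    (∫ x in (-1:ℝ)..1, (Phi N N).eval x ^ 2 * (1 + x)) = 2 :=
  Phi_orthogonality_general N
end
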